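/- arXiv:1305.5881 — 7 statements merged into one kernel-verified Lean document; each statement's English description precedes it below -/
import Mathlib

section
/- Let K be a field of characteristic 0, let E be the elliptic curve over K defined by y² = (x+2795)(x−1365)(x−1430), and let P = (341, 59136) ∈ E(K). Then there exist a 2-torsion point T ∈ E(K)[2] and a point Q ∈ E(K) with P = 2·Q + T if and only if at least one of −1, 65, −65 is a square in K. -/
/-!
Let `K` be a field of characteristic 0, let `E` be the elliptic curve over `K` defined by
`y² = (x+2795)(x−1365)(x−1430)`, and let `P = (341, 59136) ∈ E(K)`.  Then there exist a
2-torsion point `T ∈ E(K)[2]` and a point `Q ∈ E(K)` with `P = 2•Q + T` if and only if at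
least one of `−1`, `65`, `−65` is a square in `K`.
-/

open WeierstrassCurve WeierstrassCurve.Affine

private lemma some_eq_some' {F : Type*} [CommRing F] {W : Affine F} {x₁ y₁ x₂ y₂ : F}
    {h₁ : W.Nonsingular x₁ y₁} {h₂ : W.Nonsingular x₂ y₂} (hx : x₁ = x₂) (hy : y₁ = y₂) :
    Point.some _ _ h₁ = Point.some _ _ h₂ := by subst hx; subst hy; rfl

open Classical in
private lemma forward_aux' {K : Type*} [Field K] [CharZero K] {E : WeierstrassCurve K}
    (ha1 : E.a₁ = 0) (ha2 : E.a₂ = 0) (ha3 : E.a₃ = 0) (ha4 : E.a₄ = -5860075)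
    (hE : ∀ x y : K, E.toAffine.Equation x y ↔ y ^ 2 = (x + 2795) * (x - 1365) * (x - 1430))
    {X3 Y3 : K} (hB : E.toAffine.Nonsingular X3 Y3) (Q : E.toAffine.Point)
    (h2Q : 2 • Q = Point.some _ _ hB)
    (e u w : K) (hw : w ≠ 0) (he : (e + 2795) * (e - 1365) * (e - 1430) = 0)
    (hu : u * w ^ 2 = X3 - e) : IsSquare u := by
  cases Q with
  | zero =>
    rw [show (2 • Point.zero : E.toAffine.Point) = 0 from smul_zero 2] at h2Q
    exact absurd h2Q.symm (Point.some_ne_zero _)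
  | @some a b hq =>
    rw [two_nsmul] at h2Q
    have hbne : b ≠ E.toAffine.negY a b := by
      intro h; rw [Point.add_self_of_Y_eq h] at h2Q; exact Point.some_ne_zero _ h2Q.symm
    have hb0 : b ≠ 0 := by
      intro h0; apply hbne; rw [negY, ha1, ha3, h0]; ring
    rw [Point.add_self_of_Y_ne hbne] at h2Q
    injection h2Q with hx hy
    have hcb : b ^ 2 = (a + 2795) * (a - 1365) * (a - 1430) := (hE _ _).1 hq.1
    have hL : E.toAffine.slope a a b b = (3*a^2 - 5860075)/(2*b) := by
      rw [slope_of_Y_ne rfl hbne, negY, ha1, ha2, ha3, ha4]; congr 1 <;> ring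
    rw [hL] at hx
    simp only [addX, ha1, ha2] at hx
    field_simp at hx
    have key2 : (3*a^2 - 5860075)^2 = (X3 + 2*a) * (2*b)^2 := by linear_combination hx
    have hb2 : w*(2*b) ≠ 0 := mul_ne_zero hw (mul_ne_zero two_ne_zero hb0)
    exact ⟨((a - e)^2 - (3*e^2 - 5860075))/(w*(2*b)), by
      rw [div_mul_div_comm, eq_div_iff (mul_ne_zero hb2 hb2)]
      linear_combination (4*b^2)*hu + (-1)*key2 + (-4*(2*a+e))*hcb + (-8*a-4*e)*he⟩

open Classical in
theorem divisible_by_two_up_to_torsion_iff_square (K : Type*) [Field K] [CharZero K]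
    (E : WeierstrassCurve K)
    (hE : ∀ x y : K, E.toAffine.Equation x y ↔
      y ^ 2 = (x + 2795) * (x - 1365) * (x - 1430))
    (hP : E.toAffine.Nonsingular 341 59136) :
    (∃ T Q : E.toAffine.Point, 2 • T = 0 ∧ Point.some _ _ hP = 2 • Q + T) ↔
      (IsSquare (-1 : K) ∨ IsSquare (65 : K) ∨ IsSquare (-65 : K)) := by
  have E1 := (E.toAffine.equation_iff _ _).1 ((hE (-2795) 0).2 (by norm_num))
  have E2 := (E.toAffine.equation_iff _ _).1 ((hE 1365 0).2 (by norm_num))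
  have E3 := (E.toAffine.equation_iff _ _).1 ((hE 1430 0).2 (by norm_num))
  have E4 := (E.toAffine.equation_iff _ _).1 ((hE 341 59136).2 (by norm_num))
  have E5 := (E.toAffine.equation_iff _ _).1 ((hE 1205 12000).2 (by norm_num))
  have ha2 : E.a₂ = 0 := by
    linear_combination (-1/17576000)*E1 + (1/270400)*E2 + (-1/274625)*E3
  have ha4 : E.a₄ = -5860075 := by
    linear_combination (43/270400)*E1 + (21/4160)*E2 + (-22/4225)*E3
  have ha6 : E.a₆ = 5455700250 := by
    linear_combination (-231/2080)*E1 + (-473/32)*E2 + (903/65)*E3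
  have ha1 : E.a₁ = 0 := by
    linear_combination (-1/51093504)*E4 + (1/10368000)*E5 + (3199681/23224320)*ha2
      + (12721/116121600)*ha4 + (491/6386688000)*ha6
  have ha3 : E.a₃ = 0 := by
    linear_combination (1/59136)*E4 + (-341)*ha1 + (341^2/59136)*ha2 + (341/59136)*ha4
      + (1/59136)*ha6
  have hT2ns : E.toAffine.Nonsingular 1365 0 := by
    refine (E.toAffine.nonsingular_iff _ _).2 ⟨(hE _ _).2 (by norm_num), Or.inl ?_⟩
    rw [ha1, ha2, ha4]; norm_num
  have hT3ns : E.toAffine.Nonsingular 1430 0 := by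
    refine (E.toAffine.nonsingular_iff _ _).2 ⟨(hE _ _).2 (by norm_num), Or.inl ?_⟩
    rw [ha1, ha2, ha4]; norm_num
  constructor
  · rintro ⟨T, Q, hT, hPQ⟩
    rw [two_nsmul] at hT
    have h2Q : (2 : ℕ) • Q = Point.some _ _ hP + T := by
      rw [hPQ, add_assoc, hT, add_zero]
    cases T with
    | zero =>
      rw [← Point.zero_def, add_zero] at h2Q
      exact Or.inl (forward_aux' ha1 ha2 ha3 ha4 hE hP Q h2Q 1365 (-1) 32
        (by norm_num) (by norm_num) (by norm_num))
    | @some xt yt ht =>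
      have hyt : yt = E.toAffine.negY xt yt := by
        by_contra hne
        rw [Point.add_self_of_Y_ne hne] at hT
        exact Point.some_ne_zero _ hT
      have hyt0 : yt = 0 := by
        rw [negY, ha1, ha3] at hyt; linear_combination hyt/2
      subst hyt0
      have hprod : (xt + 2795) * (xt - 1365) * (xt - 1430) = 0 := by
        linear_combination - (hE xt 0).1 ht.1
      rcases mul_eq_zero.1 hprod with h12 | h3
      · rcases mul_eq_zero.1 h12 with h1 | h2
        · have hxt : xt = -2795 := by linear_combination h1
          subst hxt
          rw [Point.add_of_X_ne (by norm_num : (341 : K) ≠ -2795)] at h2Q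
          refine Or.inr (Or.inl (forward_aux' ha1 ha2 ha3 ha4 hE _ Q h2Q 1365 65 (33/7)
            (by norm_num) (by norm_num) ?_))
          rw [slope_of_X_ne (by norm_num : (341 : K) ≠ -2795)]
          simp only [addX, ha1, ha2]
          norm_num
        · have hxt : xt = 1365 := by linear_combination h2
          subst hxt
          rw [Point.add_of_X_ne (by norm_num : (341 : K) ≠ 1365)] at h2Q
          refine Or.inr (Or.inl (forward_aux' ha1 ha2 ha3 ha4 hE _ Q h2Q 1430 65 (7/4)
            (by norm_num) (by norm_num) ?_))
          rw [slope_of_X_ne (by norm_num : (341 : K) ≠ 1365)]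
          simp only [addX, ha1, ha2]
          norm_num
      · have hxt : xt = 1430 := by linear_combination h3
        subst hxt
        rw [Point.add_of_X_ne (by norm_num : (341 : K) ≠ 1430)] at h2Q
        refine Or.inr (Or.inr (forward_aux' ha1 ha2 ha3 ha4 hE _ Q h2Q 1430 (-65) (65/33)
          (by norm_num) (by norm_num) ?_))
        rw [slope_of_X_ne (by norm_num : (341 : K) ≠ 1430)]
        simp only [addX, ha1, ha2]
        norm_num
  · rintro (⟨r, hr⟩ | ⟨r, hr⟩ | ⟨r, hr⟩)
    · -- case -1 = r*r
      set xq : K := -715 - 3640*r with hxq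
      set yq : K := 236600 + 135200*r with hyq
      have hyq0 : yq ≠ 0 := by
        intro h0
        have hck : ((-1)*135200^2 - 236600^2 : K) = 0 := by
          linear_combination (135200:K)^2*hr + (135200*r - 236600)*h0
        norm_num at hck
      have hEq : E.toAffine.Equation xq yq := (hE _ _).2 (by
        rw [hxq, hyq]
        linear_combination ((-46699432000) + (-48228544000)*r)*hr)
      have hQ : E.toAffine.Nonsingular xq yq := by
        refine (E.toAffine.nonsingular_iff _ _).2 ⟨hEq, Or.inr ?_⟩
        rw [ha1, ha3]
        intro h
        exact hyq0 (by linear_combination h/2)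
      have hne : yq ≠ E.toAffine.negY xq yq := by
        rw [negY, ha1, ha3]
        intro h
        exact hyq0 (by linear_combination h/2)
      have hL : E.toAffine.slope xq xq yq yq = (3*xq^2 - 5860075)/(2*yq) := by
        rw [slope_of_Y_ne rfl hne, negY, ha1, ha2, ha3, ha4]
        congr 1 <;> ring
      have key : (3*xq^2 - 5860075)^2 = (341 + 2*xq) * (2*yq)^2 := by
        rw [hxq, hyq]
        linear_combination ((-262564700320000) + (-1773688367360000)*r
          + (-1579967101440000)*r^2)*hr
      have keyY : (3*xq^2 - 5860075)*(341 - xq) = (-59136 - yq)*(2*yq) := by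
        rw [hxq, hyq]
        linear_combination ((-135373596800) + (-144685632000)*r)*hr
      have hX : E.toAffine.addX xq xq (E.toAffine.slope xq xq yq yq) = 341 := by
        rw [hL]
        simp only [addX, ha1, ha2]
        field_simp
        linear_combination key
      have hY : E.toAffine.addY xq xq yq (E.toAffine.slope xq xq yq yq) = 59136 := by
        rw [addY, negAddY, hX, hL, negY, ha1, ha3]
        field_simp
        linear_combination keyY + (270747193600 + 289371264000*r)*hr
      refine ⟨0, Point.some _ _ hQ, by simp, ?_⟩
      rw [add_zero, two_nsmul, Point.add_self_of_Y_ne hne]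
      exact (some_eq_some' hX hY).symm
    · -- case 65 = r*r
      set xq : K := 5135/2 + (325/2)*r with hxq
      set yq : K := 105625 + 12025*r with hyq
      have hyq0 : yq ≠ 0 := by
        intro h0
        have hck : (65*12025^2 - 105625^2 : K) = 0 := by
          linear_combination (12025:K)^2*hr + (12025*r - 105625)*h0
        norm_num at hck
      have hEq : E.toAffine.Equation xq yq := (hE _ _).2 (by
        rw [hxq, hyq]
        linear_combination ((470348125/8) + (34328125/8)*r)*hr)
      have hQ : E.toAffine.Nonsingular xq yq := by
        refine (E.toAffine.nonsingular_iff _ _).2 ⟨hEq, Or.inr ?_⟩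
        rw [ha1, ha3]
        intro h
        exact hyq0 (by linear_combination h/2)
      have hne : yq ≠ E.toAffine.negY xq yq := by
        rw [negY, ha1, ha3]
        intro h
        exact hyq0 (by linear_combination h/2)
      have hL : E.toAffine.slope xq xq yq yq = (3*xq^2 - 5860075)/(2*yq) := by
        rw [slope_of_Y_ne rfl hne, negY, ha1, ha2, ha3, ha4]
        congr 1 <;> ring
      have key : (3*xq^2 - 5860075)^2 = (26065/16 + 2*xq) * (2*yq)^2 := by
        rw [hxq, hyq]
        linear_combination ((-26633647421875/16) + (-834551046875/4)*r
          + (-100409765625/16)*r^2)*hr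
      have keyY : (3*xq^2 - 5860075)*(26065/16 - xq) = (-(975975/64) - yq)*(2*yq) := by
        rw [hxq, hyq]
        linear_combination ((12283448125/64) + (102984375/8)*r)*hr
      have hX : E.toAffine.addX xq xq (E.toAffine.slope xq xq yq yq) = 26065/16 := by
        rw [hL]
        simp only [addX, ha1, ha2]
        field_simp
        linear_combination key + ((-399504711328125/16) + (-12518265703125/4)*r + (-1506146484375/16)*r^2)*hr
      have hY : E.toAffine.addY xq xq yq (E.toAffine.slope xq xq yq yq) = 975975/64 := by
        rw [addY, negAddY, hX, hL, negY, ha1, ha3]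
        field_simp
        linear_combination keyY + ((-12590534328125/64) + (-105558984375/8)*r)*hr
      have hPT : E.toAffine.Nonsingular (26065/16) (975975/64) := by
        refine (E.toAffine.nonsingular_iff _ _).2 ⟨(hE _ _).2 (by norm_num), Or.inr ?_⟩
        rw [ha1, ha3]; norm_num
      refine ⟨Point.some _ _ hT2ns, Point.some _ _ hQ, ?_, ?_⟩
      · rw [two_nsmul]
        exact Point.add_of_Y_eq rfl (by rw [negY, ha1, ha3]; ring)
      · rw [two_nsmul, Point.add_self_of_Y_ne hne, some_eq_some' hX hY (h₂ := hPT),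
          Point.add_of_X_ne (by norm_num : (26065/16 : K) ≠ 1365)]
        refine some_eq_some' ?_ ?_
        · rw [slope_of_X_ne (by norm_num : (26065/16 : K) ≠ 1365)]
          simp only [addX, ha1, ha2]
          norm_num
        · rw [slope_of_X_ne (by norm_num : (26065/16 : K) ≠ 1365)]
          simp only [addY, negAddY, addX, negY, ha1, ha2, ha3]
          norm_num
    · -- case -65 = r*r
      set xq : K := 8645/9 + (2080/9)*r with hxq
      set yq : K := -1487200/27 + (371800/27)*r with hyq
      have hyq0 : yq ≠ 0 := by
        intro h0
        have hck : ((-65)*(371800/27)^2 - (1487200/27)^2 : K) = 0 := by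
          linear_combination ((371800/27):K)^2*hr + ((371800/27)*r + 1487200/27)*h0
        norm_num at hck
      have hEq : E.toAffine.Equation xq yq := (hE _ _).2 (by
        rw [hxq, hyq]
        linear_combination ((-26030056000/729) + (8998912000/729)*r)*hr)
      have hQ : E.toAffine.Nonsingular xq yq := by
        refine (E.toAffine.nonsingular_iff _ _).2 ⟨hEq, Or.inr ?_⟩
        rw [ha1, ha3]
        intro h
        exact hyq0 (by linear_combination h/2)
      have hne : yq ≠ E.toAffine.negY xq yq := by
        rw [negY, ha1, ha3]
        intro h
        exact hyq0 (by linear_combination h/2)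
      have hL : E.toAffine.slope xq xq yq yq = (3*xq^2 - 5860075)/(2*yq) := by
        rw [slope_of_Y_ne rfl hne, negY, ha1, ha2, ha3, ha4]
        congr 1 <;> ring
      have key : (3*xq^2 - 5860075)^2 = (1282645/1089 + 2*xq) * (2*yq)^2 := by
        rw [hxq, hyq]
        linear_combination ((2831053145440000/6561) + (-500406999040000/6561)*r
          + (-18717736960000/729)*r^2)*hr
      have keyY : (3*xq^2 - 5860075)*(1282645/1089 - xq)
          = (-(-492128000/35937) - yq)*(2*yq) := by
        rw [hxq, hyq]
        linear_combination ((-9370152272000/88209) + (8998912000/243)*r)*hr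
      have hX : E.toAffine.addX xq xq (E.toAffine.slope xq xq yq yq) = 1282645/1089 := by
        rw [hL]
        simp only [addX, ha1, ha2]
        field_simp
        linear_combination key + ((3080185822238720000/6561) + (-544442814955520000/6561)*r + (-20364897812480000/729)*r^2)*hr
      have hY : E.toAffine.addY xq xq yq (E.toAffine.slope xq xq yq yq) = -492128000/35937 := by
        rw [addY, negAddY, hX, hL, negY, ha1, ha3]
        field_simp
        linear_combination keyY + ((366704601004715168000/88209) + (-352175966691328000/243)*r)*hr
      have hPT : E.toAffine.Nonsingular (1282645/1089) (-492128000/35937) := by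
        refine (E.toAffine.nonsingular_iff _ _).2 ⟨(hE _ _).2 (by norm_num), Or.inr ?_⟩
        rw [ha1, ha3]; norm_num
      refine ⟨Point.some _ _ hT3ns, Point.some _ _ hQ, ?_, ?_⟩
      · rw [two_nsmul]
        exact Point.add_of_Y_eq rfl (by rw [negY, ha1, ha3]; ring)
      · rw [two_nsmul, Point.add_self_of_Y_ne hne, some_eq_some' hX hY (h₂ := hPT),
          Point.add_of_X_ne (by norm_num : (1282645/1089 : K) ≠ 1430)]
        refine some_eq_some' ?_ ?_
        · rw [slope_of_X_ne (by norm_num : (1282645/1089 : K) ≠ 1430)]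
          simp only [addX, ha1, ha2]
          norm_num
        · rw [slope_of_X_ne (by norm_num : (1282645/1089 : K) ≠ 1430)]
          simp only [addY, negAddY, addX, negY, ha1, ha2, ha3]
          norm_num
end

section
/- Let E be the elliptic curve over ℚ defined by y² = (x+2795)(x−1365)(x−1430). Then E(ℚ) contains no point of order 4; equivalently, the 2-primary part of the torsion subgroup of E(ℚ) equals E(ℚ)[2], which is isomorphic to (ℤ/2ℤ)². -/
/-!
Let `E` be the elliptic curve over `ℚ` defined by `y² = (x+2795)(x−1365)(x−1430)`.  Then
`E(ℚ)` contains no point of order 4; equivalently, the 2-primary part of the torsion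
subgroup of `E(ℚ)` equals `E(ℚ)[2]`, which is isomorphic to `(ℤ/2ℤ)²`.
-/

open WeierstrassCurve WeierstrassCurve.Affine

private lemma no_sq_65 (q : ℚ) : q ^ 2 ≠ 65 := by
  intro h
  have hden : ((q.den : ℚ)) ≠ 0 := Nat.cast_ne_zero.mpr q.den_nz
  have key : ((q.num : ℚ)) ^ 2 = 65 * ((q.den : ℚ)) ^ 2 := by
    rw [← Rat.num_div_den q] at h
    field_simp at h
    linear_combination h
  have key' : q.num ^ 2 = 65 * (q.den : ℤ) ^ 2 := by exact_mod_cast key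
  have hdvd : ((q.den : ℤ)) ^ 2 ∣ q.num ^ 2 := ⟨65, by linarith⟩
  have hdvd' : q.den ^ 2 ∣ q.num.natAbs ^ 2 := by
    have := Int.natAbs_dvd_natAbs.mpr hdvd
    simpa [Int.natAbs_pow] using this
  have hcop : Nat.Coprime (q.den ^ 2) (q.num.natAbs ^ 2) :=
    Nat.Coprime.pow _ _ (Nat.Coprime.symm q.reduced)
  have hden1 : q.den ^ 2 = 1 := Nat.Coprime.eq_one_of_dvd hcop hdvd'
  have hd1 : (q.den : ℤ) = 1 := by
    have : q.den = 1 := by nlinarith [q.pos]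
    exact_mod_cast this
  rw [hd1] at key'
  have key65 : q.num ^ 2 = 65 := by linarith
  have h1 : 18 * q.num ≤ 146 := by nlinarith [sq_nonneg (q.num - 9)]
  have h2 : -146 ≤ 18 * q.num := by nlinarith [sq_nonneg (q.num + 9)]
  have h8 : q.num ≤ 8 := by omega
  have h8' : -8 ≤ q.num := by omega
  nlinarith [mul_nonneg (by linarith : (0:ℤ) ≤ 8 - q.num) (by linarith : (0:ℤ) ≤ q.num + 8)]

private lemma aux_no_halve (x y e : ℚ) (hy : y ≠ 0)
    (heq : y ^ 2 = (x + 2795) * (x - 1365) * (x - 1430))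
    (he : e = -2795 ∨ e = 1365 ∨ e = 1430)
    (hX : ((3 * x ^ 2 - 5860075) / (2 * y)) ^ 2 - 2 * x = e) : False := by
  have h2y : (2 * y) ≠ 0 := by simpa using hy
  have hpoly : (3 * x ^ 2 - 5860075) ^ 2 = (e + 2 * x) * (2 * y) ^ 2 := by
    field_simp at hX
    linear_combination hX
  rcases he with rfl | rfl | rfl
  · have hA : ((x + 2795) ^ 2 - 17576000) ^ 2 = 0 := by
      linear_combination hpoly + (4 * (-2795 + 2 * x)) * heq
    have hA' : (x + 2795) ^ 2 - 17576000 = 0 := (pow_eq_zero_iff two_ne_zero).mp hA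
    exact no_sq_65 ((x + 2795) / 520) (by
      field_simp
      linear_combination hA')
  · have hA : ((x - 1365) ^ 2 + 270400) ^ 2 = 0 := by
      linear_combination hpoly + (4 * (1365 + 2 * x)) * heq
    nlinarith [sq_nonneg (x - 1365), sq_nonneg ((x - 1365) ^ 2 + 270400)]
  · have hA : ((x - 1430) ^ 2 - 274625) ^ 2 = 0 := by
      linear_combination hpoly + (4 * (1430 + 2 * x)) * heq
    have hA' : (x - 1430) ^ 2 - 274625 = 0 := (pow_eq_zero_iff two_ne_zero).mp hA
    exact no_sq_65 ((x - 1430) / 65) (by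
      field_simp
      linear_combination hA')

theorem no_rational_point_of_order_four (E : WeierstrassCurve ℚ)
    (hE : ∀ x y : ℚ, E.toAffine.Equation x y ↔
      y ^ 2 = (x + 2795) * (x - 1365) * (x - 1430)) :
    (¬∃ P : E.toAffine.Point, addOrderOf P = 4) ∧
    (∀ P : E.toAffine.Point, (∃ k : ℕ, 2 ^ k • P = 0) ↔ 2 • P = 0) ∧
    Nonempty ((Submodule.torsionBy ℤ E.toAffine.Point 2) ≃+ (ZMod 2 × ZMod 2)) := by
  have key : ∀ x y : ℚ, y ^ 2 + E.toAffine.a₁ * x * y + E.toAffine.a₃ * y =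
      x ^ 3 + E.toAffine.a₂ * x ^ 2 + E.toAffine.a₄ * x + E.toAffine.a₆ ↔
      y ^ 2 = (x + 2795) * (x - 1365) * (x - 1430) := fun x y =>
    (E.toAffine.equation_iff x y).symm.trans (hE x y)
  have hc1 := (key (-2795) 0).mpr (by norm_num)
  have hc2 := (key 1365 0).mpr (by norm_num)
  have hc3 := (key 1430 0).mpr (by norm_num)
  have hL2 : E.toAffine.a₁ * 1365 + E.toAffine.a₃ = 0 := by
    have h := (key 1365 (-(E.toAffine.a₁ * 1365 + E.toAffine.a₃))).mp (by linear_combination hc2)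
    have h' : (E.toAffine.a₁ * 1365 + E.toAffine.a₃) ^ 2 = 0 := by linear_combination h
    exact (pow_eq_zero_iff (two_ne_zero)).mp h'
  have hL3 : E.toAffine.a₁ * 1430 + E.toAffine.a₃ = 0 := by
    have h := (key 1430 (-(E.toAffine.a₁ * 1430 + E.toAffine.a₃))).mp (by linear_combination hc3)
    have h' : (E.toAffine.a₁ * 1430 + E.toAffine.a₃) ^ 2 = 0 := by linear_combination h
    exact (pow_eq_zero_iff (two_ne_zero)).mp h'
  have ha1 : E.toAffine.a₁ = 0 := by linear_combination (hL3 - hL2) / 65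
  have ha3 : E.toAffine.a₃ = 0 := by linear_combination (1430 * hL2 - 1365 * hL3) / 65
  have ha2 : E.toAffine.a₂ = 0 := by
    linear_combination (-1/17576000) * hc1 + (1/270400) * hc2 + (-1/274625) * hc3
  have ha4 : E.toAffine.a₄ = -5860075 := by
    linear_combination (43/270400) * hc1 + (21/4160) * hc2 + (-22/4225) * hc3
  have ha6 : E.toAffine.a₆ = 5455700250 := by
    linear_combination (-231/2080) * hc1 + (-473/32) * hc2 + (903/65) * hc3
  have hnegY : ∀ x y : ℚ, E.toAffine.negY x y = -y := by
    intro x y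
    simp only [negY, ha1, ha3]
    ring
  -- the three nonsingular 2-torsion points
  have hns1 : E.toAffine.Nonsingular (-2795) 0 := by
    rw [nonsingular_iff]
    refine ⟨(hE _ _).mpr (by norm_num), Or.inl ?_⟩
    rw [ha1, ha2, ha4]
    norm_num
  have hns2 : E.toAffine.Nonsingular 1365 0 := by
    rw [nonsingular_iff]
    refine ⟨(hE _ _).mpr (by norm_num), Or.inl ?_⟩
    rw [ha1, ha2, ha4]
    norm_num
  have hns3 : E.toAffine.Nonsingular 1430 0 := by
    rw [nonsingular_iff]
    refine ⟨(hE _ _).mpr (by norm_num), Or.inl ?_⟩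
    rw [ha1, ha2, ha4]
    norm_num
  -- doubling characterisation
  have hdbl : ∀ {x y : ℚ} (h : E.toAffine.Nonsingular x y),
      (Point.some _ _ h + Point.some _ _ h = 0 ↔ y = 0) := by
    intro x y h
    constructor
    · intro hadd
      by_contra hy
      have hy' : y ≠ E.toAffine.negY x y := by
        rw [hnegY]
        intro hc
        exact hy (by linarith)
      rw [Point.add_self_of_Y_ne hy'] at hadd
      exact Point.some_ne_zero _ hadd
    · intro hy
      exact Point.add_self_of_Y_eq (by rw [hnegY, hy]; norm_num)
  -- no point halves a nontrivial 2-torsion point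
  have hstep : ∀ P : E.toAffine.Point, (P + P) + (P + P) = 0 → P + P = 0 := by
    intro P h
    rcases P with _ | @⟨x, y, hP⟩
    · exact add_zero _
    · by_cases hy : y = 0
      · exact (hdbl hP).mpr hy
      · exfalso
        have hy' : y ≠ E.toAffine.negY x y := by
          rw [hnegY]
          intro hc
          exact hy (by linarith)
        rw [Point.add_self_of_Y_ne hy'] at h
        have hY0 : E.toAffine.addY x x y (E.toAffine.slope x x y y) = 0 :=
          (hdbl _).mp h
        have hLval : E.toAffine.slope x x y y = (3 * x ^ 2 - 5860075) / (2 * y) := by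
          rw [slope_of_Y_ne rfl hy', hnegY, ha1, ha2, ha4]
          ring
        have haX : E.toAffine.addX x x (E.toAffine.slope x x y y) =
            ((3 * x ^ 2 - 5860075) / (2 * y)) ^ 2 - 2 * x := by
          simp only [addX]
          rw [hLval, ha1, ha2]
          ring
        have heqn : E.toAffine.Equation
            (E.toAffine.addX x x (E.toAffine.slope x x y y)) 0 :=
          hY0 ▸ (nonsingular_add hP hP fun hxy => hy' hxy.2).1
        have hxy : y ^ 2 = (x + 2795) * (x - 1365) * (x - 1430) := (hE x y).mp hP.1
        have h00 := (hE _ 0).mp heqn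
        generalize hXdef : E.toAffine.addX x x (E.toAffine.slope x x y y) = X at h00 haX
        have hfac : (X + 2795) * (X - 1365) * (X - 1430) = 0 := by linear_combination -h00
        rcases mul_eq_zero.mp hfac with h' | h3
        · rcases mul_eq_zero.mp h' with h1 | h2
          · exact aux_no_halve x y (-2795) hy hxy (Or.inl rfl)
              (by rw [← haX]; linarith)
          · exact aux_no_halve x y 1365 hy hxy (Or.inr (Or.inl rfl))
              (by rw [← haX]; linarith)
        · exact aux_no_halve x y 1430 hy hxy (Or.inr (Or.inr rfl))
            (by rw [← haX]; linarith)
  refine ⟨?_, ?_, ?_⟩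
  · -- no point of order 4
    rintro ⟨P, hP4⟩
    have h4 : (4 : ℕ) • P = 0 := hP4 ▸ addOrderOf_nsmul_eq_zero P
    have h22 : (P + P) + (P + P) = 0 := by
      rw [← h4]
      abel
    have h2 : P + P = 0 := hstep P h22
    have hdvd : addOrderOf P ∣ 2 :=
      addOrderOf_dvd_of_nsmul_eq_zero (by rw [two_nsmul]; exact h2)
    rw [hP4] at hdvd
    norm_num at hdvd
  · -- 2-primary torsion is 2-torsion
    have haux : ∀ (k : ℕ) (P : E.toAffine.Point), 2 ^ k • P = 0 → 2 • P = 0 := by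
      intro k
      induction k with
      | zero =>
        intro P h
        rw [pow_zero, one_smul] at h
        rw [h, two_nsmul, add_zero]
      | succ n ih =>
        intro P h
        rw [pow_succ, mul_smul] at h
        have h2 := ih _ h
        simp only [two_nsmul] at h2 ⊢
        exact hstep P h2
    intro P
    exact ⟨fun ⟨k, hk⟩ => haux k P hk, fun h => ⟨1, by simpa using h⟩⟩
  · -- 2-torsion subgroup is (ℤ/2)²
    haveI : Fact (Nat.Prime 2) := ⟨Nat.prime_two⟩
    set S := Submodule.torsionBy ℤ E.toAffine.Point 2 with hSdef
    have hmem : ∀ P : E.toAffine.Point, P ∈ S ↔ P + P = 0 := by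
      intro P
      rw [hSdef, Submodule.mem_torsionBy_iff, two_zsmul]
    set Q1 := Point.some _ _ hns1 with hQ1
    set Q2 := Point.some _ _ hns2 with hQ2
    set Q3 := Point.some _ _ hns3 with hQ3
    have hm0 : (0 : E.toAffine.Point) ∈ S := zero_mem S
    have hm1 : Q1 ∈ S := (hmem Q1).mpr ((hdbl hns1).mpr rfl)
    have hm2 : Q2 ∈ S := (hmem Q2).mpr ((hdbl hns2).mpr rfl)
    have hm3 : Q3 ∈ S := (hmem Q3).mpr ((hdbl hns3).mpr rfl)
    have hSP : ∀ P : E.toAffine.Point, P ∈ S → P = 0 ∨ P = Q1 ∨ P = Q2 ∨ P = Q3 := by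
      intro P hP
      rw [hmem] at hP
      rcases P with _ | @⟨x, y, h⟩
      · exact Or.inl rfl
      · have hy : y = 0 := (hdbl h).mp hP
        subst hy
        have hx := (hE x 0).mp h.1
        have hfac : (x + 2795) * (x - 1365) * (x - 1430) = 0 := by linear_combination -hx
        have hxval : x = -2795 ∨ x = 1365 ∨ x = 1430 := by
          rcases mul_eq_zero.mp hfac with h' | h3
          · rcases mul_eq_zero.mp h' with h1 | h2
            · exact Or.inl (by linarith)
            · exact Or.inr (Or.inl (by linarith))
          · exact Or.inr (Or.inr (by linarith))
        rcases hxval with rfl | rfl | rfl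
        · exact Or.inr (Or.inl rfl)
        · exact Or.inr (Or.inr (Or.inl rfl))
        · exact Or.inr (Or.inr (Or.inr rfl))
    have hne01 : (0 : E.toAffine.Point) ≠ Q1 := fun h => Point.some_ne_zero hns1 h.symm
    have hne02 : (0 : E.toAffine.Point) ≠ Q2 := fun h => Point.some_ne_zero hns2 h.symm
    have hne03 : (0 : E.toAffine.Point) ≠ Q3 := fun h => Point.some_ne_zero hns3 h.symm
    have hne12 : Q1 ≠ Q2 := by
      intro hc
      rw [hQ1, hQ2] at hc
      injection hc with h1 h2
      norm_num at h1
    have hne13 : Q1 ≠ Q3 := by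
      intro hc
      rw [hQ1, hQ3] at hc
      injection hc with h1 h2
      norm_num at h1
    have hne23 : Q2 ≠ Q3 := by
      intro hc
      rw [hQ2, hQ3] at hc
      injection hc with h1 h2
      norm_num at h1
    have hnodup : ([(⟨0, hm0⟩ : S), (⟨Q1, hm1⟩ : S), (⟨Q2, hm2⟩ : S),
        (⟨Q3, hm3⟩ : S)] : List S).Nodup := by
      simp [Subtype.mk.injEq, hne01, hne02, hne03, hne12, hne13, hne23]
    letI hfin : Fintype S :=
      ⟨⟨(↑[(⟨0, hm0⟩ : S), (⟨Q1, hm1⟩ : S), (⟨Q2, hm2⟩ : S), (⟨Q3, hm3⟩ : S)] : Multiset S),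
        Multiset.coe_nodup.mpr hnodup⟩, by
          rintro ⟨P, hP⟩
          rcases hSP P hP with h | h | h | h <;>
            simp [Finset.mem_mk, Subtype.ext_iff, h]⟩
    have hcard : Fintype.card S = 4 := rfl
    haveI : Module (ZMod 2) S := AddCommGroup.zmodModule (n := 2) (by
      rintro ⟨P, hP⟩
      have hPP : P + P = 0 := (hmem P).mp hP
      rw [two_nsmul]
      exact Subtype.ext hPP)
    haveI : Module.Finite (ZMod 2) S := Module.Finite.of_finite
    have hfr : Module.finrank (ZMod 2) S = 2 := by
      have h := Module.card_eq_pow_finrank (K := ZMod 2) (V := S)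
      rw [hcard, ZMod.card] at h
      have h' : (2 : ℕ) ^ Module.finrank (ZMod 2) S = 2 ^ 2 := by
        rw [← h]
        norm_num
      exact Nat.pow_right_injective (le_refl 2) h'
    exact ⟨((Module.finBasisOfFinrankEq (ZMod 2) S hfr).equivFun.trans
      (LinearEquiv.finTwoArrow (ZMod 2) (ZMod 2))).toAddEquiv⟩
end

section
/- Let K be a field of characteristic 0, let d ∈ K be nonzero, and let a, b, c ∈ K be nonzero elements with abc = d. For all X, Y, Z ∈ K satisfying aX³ + bY³ + cZ³ = 0, the elements x, y, z ∈ K defined by x + y = 9abc·X³Y³Z³, x − y = (aX³ − bY³)(bY³ − cZ³)(cZ³ − aX³), and z = 3(abX³Y³ + bcY³Z³ + caZ³X³)·XYZ satisfy x³ + y³ + d·z³ = 0. -/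
theorem euler_covering_maps_to_curve (K : Type*) [Field K] [CharZero K]
    (d a b c : K) (hd : d ≠ 0) (ha : a ≠ 0) (hb : b ≠ 0) (hc : c ≠ 0)
    (habc : a * b * c = d)
    (X Y Z : K) (hC : a * X ^ 3 + b * Y ^ 3 + c * Z ^ 3 = 0)
    (x y z : K)
    (hxy : x + y = 9 * a * b * c * X ^ 3 * Y ^ 3 * Z ^ 3)
    (hxy' : x - y = (a * X ^ 3 - b * Y ^ 3) * (b * Y ^ 3 - c * Z ^ 3) *
      (c * Z ^ 3 - a * X ^ 3))
    (hz : z = 3 * (a * b * X ^ 3 * Y ^ 3 + b * c * Y ^ 3 * Z ^ 3 +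
      c * a * Z ^ 3 * X ^ 3) * (X * Y * Z)) :
    x ^ 3 + y ^ 3 + d * z ^ 3 = 0 := by
  subst habc hz
  have hx : x = (9 * a * b * c * X ^ 3 * Y ^ 3 * Z ^ 3 +
      (a * X ^ 3 - b * Y ^ 3) * (b * Y ^ 3 - c * Z ^ 3) * (c * Z ^ 3 - a * X ^ 3)) / 2 := by
    linear_combination (hxy + hxy') / 2
  have hy : y = (9 * a * b * c * X ^ 3 * Y ^ 3 * Z ^ 3 -
      (a * X ^ 3 - b * Y ^ 3) * (b * Y ^ 3 - c * Z ^ 3) * (c * Z ^ 3 - a * X ^ 3)) / 2 := by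
    linear_combination (hxy - hxy') / 2
  subst hx hy
  set q := a * b * c * X ^ 3 * Y ^ 3 * Z ^ 3 with hq
  set p := a * b * X ^ 3 * Y ^ 3 + b * c * Y ^ 3 * Z ^ 3 + c * a * Z ^ 3 * X ^ 3 with hp
  set e := a * X ^ 3 + b * Y ^ 3 + c * Z ^ 3 with he
  linear_combination (27 * q / 4 * (e * p ^ 2 + 18 * p * q - 4 * e ^ 2 * q)) * hC
end

section
/- Let K be a field of characteristic 0 containing a primitive 9th root of unity ζ and an element δ with δ³ = d, where d = 3d' with d' ∈ K nonzero. Then the point ((2ζ⁵ + ζ⁴ + ζ² + 2ζ)·δ : (−ζ³ + ζ² + ζ − 1)·δ : −3) lies on the curve C : X³ + 3Y³ + d'Z³ = 0, and its image under π is the point (0 : −δ : 1), which is a 3-torsion point of E : x³ + y³ + dz³ = 0. -/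
/-!
Let `K` be a field of characteristic 0 containing a primitive 9th root of unity `ζ` and an
element `δ` with `δ³ = d`, where `d = 3d'` with `d' ∈ K` nonzero.  Then the point
`((2ζ⁵ + ζ⁴ + ζ² + 2ζ)·δ : (−ζ³ + ζ² + ζ − 1)·δ : −3)` lies on the curve
`C : X³ + 3Y³ + d'Z³ = 0`, and its image under `π` is the point `(0 : −δ : 1)`, which is a
3-torsion point of `E : x³ + y³ + dz³ = 0` (i.e. a point of `E` with `xyz = 0`).

Here `π` is Euler's 3-covering map for `(a,b,c) = (1,3,d')`: it sends `(X:Y:Z)` with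
`aX³+bY³+cZ³ = 0` to `(x:y:z)` where `x + y = 9abc·X³Y³Z³`,
`x − y = (aX³−bY³)(bY³−cZ³)(cZ³−aX³)` and `z = 3(abX³Y³+bcY³Z³+caZ³X³)·XYZ`.
-/

/-- First coordinate of Euler's 3-covering map `π` (in characteristic `≠ 2`, the element
`x` is determined by `x + y` and `x − y`). -/
def piX {K : Type*} [Field K] (a b c X Y Z : K) : K :=
  (9 * a * b * c * X ^ 3 * Y ^ 3 * Z ^ 3 +
    (a * X ^ 3 - b * Y ^ 3) * (b * Y ^ 3 - c * Z ^ 3) * (c * Z ^ 3 - a * X ^ 3)) / 2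

/-- Second coordinate of Euler's 3-covering map `π`. -/
def piY {K : Type*} [Field K] (a b c X Y Z : K) : K :=
  (9 * a * b * c * X ^ 3 * Y ^ 3 * Z ^ 3 -
    (a * X ^ 3 - b * Y ^ 3) * (b * Y ^ 3 - c * Z ^ 3) * (c * Z ^ 3 - a * X ^ 3)) / 2

/-- Third coordinate of Euler's 3-covering map `π`. -/
def piZ {K : Type*} [Field K] (a b c X Y Z : K) : K :=
  3 * (a * b * X ^ 3 * Y ^ 3 + b * c * Y ^ 3 * Z ^ 3 + c * a * Z ^ 3 * X ^ 3) * (X * Y * Z)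

set_option maxHeartbeats 2000000 in
theorem nineth_root_of_unity_point_maps_to_three_torsion (K : Type*) [Field K] [CharZero K]
    (d d' : K) (hd' : d' ≠ 0) (hd : d = 3 * d')
    (ζ : K) (hζ : IsPrimitiveRoot ζ 9) (δ : K) (hδ : δ ^ 3 = d) :
    ((2 * ζ ^ 5 + ζ ^ 4 + ζ ^ 2 + 2 * ζ) * δ) ^ 3 +
      3 * ((-ζ ^ 3 + ζ ^ 2 + ζ - 1) * δ) ^ 3 + d' * (-3 : K) ^ 3 = 0 ∧
    (∃ lam : K, lam ≠ 0 ∧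
      piX 1 3 d' ((2 * ζ ^ 5 + ζ ^ 4 + ζ ^ 2 + 2 * ζ) * δ)
          ((-ζ ^ 3 + ζ ^ 2 + ζ - 1) * δ) (-3) = lam * 0 ∧
      piY 1 3 d' ((2 * ζ ^ 5 + ζ ^ 4 + ζ ^ 2 + 2 * ζ) * δ)
          ((-ζ ^ 3 + ζ ^ 2 + ζ - 1) * δ) (-3) = lam * (-δ) ∧
      piZ 1 3 d' ((2 * ζ ^ 5 + ζ ^ 4 + ζ ^ 2 + 2 * ζ) * δ)
          ((-ζ ^ 3 + ζ ^ 2 + ζ - 1) * δ) (-3) = lam * 1) ∧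
    (0 : K) ^ 3 + (-δ) ^ 3 + d * 1 ^ 3 = 0 ∧ (0 : K) * (-δ) * 1 = 0 := by
  have hδ3 : δ ^ 3 = 3 * d' := by rw [hδ, hd]
  have hδ0 : δ ≠ 0 := by
    intro h
    exact hd' (by linear_combination (-1/3 : K) * hδ3 + (1/3 : K) * δ^2 * h)
  have hΦ : ζ ^ 6 + ζ ^ 3 + 1 = 0 := by
    have h9 : ζ ^ 9 = 1 := hζ.pow_eq_one
    have h3 : ζ ^ 3 ≠ 1 := hζ.pow_ne_one_of_pos_of_lt (by norm_num) (by norm_num)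
    have : (ζ ^ 3 - 1) * (ζ ^ 6 + ζ ^ 3 + 1) = 0 := by linear_combination h9
    rcases mul_eq_zero.mp this with h | h
    · exact absurd (by linear_combination h) h3
    · exact h
  have hw : ((6:K)*ζ^2 - (6:K)*ζ - (9:K)*ζ^4 - 8 - (3:K)*ζ^5) ≠ 0 := by
    intro h
    have : ((6:K)*ζ^2 - (6:K)*ζ - (9:K)*ζ^4 - 8 - (3:K)*ζ^5) * ((1:K) - 3*ζ + 3*ζ^2 + 3*ζ^5) = 1 := by
      linear_combination ((-9:K) + (18:K)*ζ^1 + (-27:K)*ζ^3 + (-9:K)*ζ^4) * hΦ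
    rw [h, zero_mul] at this
    exact zero_ne_one this
  refine ⟨?_, ⟨(59049:K) * d'^2 * δ^2 * ((6:K)*ζ^2 - (6:K)*ζ - (9:K)*ζ^4 - 8 - (3:K)*ζ^5), ?_, ?_, ?_, ?_⟩, ?_, ?_⟩
  · linear_combination ((9:K)) * hδ3 + ((-12:K)*δ^3 + (9:K)*ζ^1*δ^3 + (-4:K)*ζ^3*δ^3 + (21:K)*ζ^4*δ^3 + (24:K)*ζ^5*δ^3 + (5:K)*ζ^6*δ^3 + (6:K)*ζ^7*δ^3 + (12:K)*ζ^8*δ^3 + (8:K)*ζ^9*δ^3) * hΦ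
  · exact mul_ne_zero (mul_ne_zero (mul_ne_zero (by norm_num) (pow_ne_zero 2 hd')) (pow_ne_zero 2 hδ0)) hw
  · simp only [piX]
    linear_combination ((0:K)*d'^2 + (-6561/2:K)*δ^3*d'^1 + (-28431:K)*δ^6 + (0:K)*ζ^1*d'^2 + (-2187:K)*ζ^1*δ^3*d'^1 + (-21141:K)*ζ^1*δ^6 + (0:K)*ζ^2*d'^2 + (2187:K)*ζ^2*δ^3*d'^1 + (21141:K)*ζ^2*δ^6 + (0:K)*ζ^4*d'^2 + (-4374:K)*ζ^4*δ^3*d'^1 + (-64881/2:K)*ζ^4*δ^6 + (0:K)*ζ^5*d'^2 + (-2187:K)*ζ^5*δ^3*d'^1 + (-22599/2:K)*ζ^5*δ^6) * hδ3 + ((-10935:K)*δ^3*d'^2 + (-81891:K)*δ^6*d'^1 + (28431:K)*δ^9 + (-6561/2:K)*ζ^1*δ^3*d'^2 + (-61965:K)*ζ^1*δ^6*d'^1 + (21141:K)*ζ^1*δ^9 + (6561:K)*ζ^2*δ^3*d'^2 + (124659/2:K)*ζ^2*δ^6*d'^1 + (-21141:K)*ζ^2*δ^9 + (-729:K)*ζ^3*δ^3*d'^2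 + (86751:K)*ζ^3*δ^6*d'^1 + (-28395:K)*ζ^3*δ^9 + (-15309/2:K)*ζ^4*δ^3*d'^2 + (-85293/2:K)*ζ^4*δ^6*d'^1 + (22275/2:K)*ζ^4*δ^9 + (-8748:K)*ζ^5*δ^3*d'^2 + (-102060:K)*ζ^5*δ^6*d'^1 + (64935/2:K)*ζ^5*δ^9 + (-3645/2:K)*ζ^6*δ^3*d'^2 + (59751/2:K)*ζ^6*δ^6*d'^1 + (2037/2:K)*ζ^6*δ^9 + (-2187:K)*ζ^7*δ^3*d'^2 + (100926:K)*ζ^7*δ^6*d'^1 + (-67041/2:K)*ζ^7*δ^9 + (-4374:K)*ζ^8*δ^3*d'^2 + (-27297:K)*ζ^8*δ^6*d'^1 + (-28197/2:K)*ζ^8*δ^9 + (-2916:K)*ζ^9*δ^3*d'^2 + (-97929:K)*ζ^9*δ^6*d'^1 + (66327/2:K)*ζ^9*δ^9 + (16362:K)*ζ^10*δ^6*d'^1 + (25614:K)*ζ^10*δ^9 + (112347/2:K)*ζ^11*δ^6*d'^1 + (-33246:K)*ζ^11*δ^9 + (-94041/2:K)*ζ^12*δ^6*d'^1 + (-65109/2:K)*ζ^12*δ^9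 + (-113805/2:K)*ζ^13*δ^6*d'^1 + (33300:K)*ζ^13*δ^9 + (2592:K)*ζ^14*δ^6*d'^1 + (33129:K)*ζ^14*δ^9 + (-12123:K)*ζ^15*δ^6*d'^1 + (-31263:K)*ζ^15*δ^9 + (-36774:K)*ζ^16*δ^6*d'^1 + (-56457/2:K)*ζ^16*δ^9 + (-18630:K)*ζ^17*δ^6*d'^1 + (52857/2:K)*ζ^17*δ^9 + (-23571/2:K)*ζ^18*δ^6*d'^1 + (42711/2:K)*ζ^18*δ^9 + (-16362:K)*ζ^19*δ^6*d'^1 + (-39951/2:K)*ζ^19*δ^9 + (-9882:K)*ζ^20*δ^6*d'^1 + (-30609/2:K)*ζ^20*δ^9 + (-3888:K)*ζ^21*δ^6*d'^1 + (27699/2:K)*ζ^21*δ^9 + (-3240:K)*ζ^22*δ^6*d'^1 + (20511/2:K)*ζ^22*δ^9 + (-2592:K)*ζ^23*δ^6*d'^1 + (-9342:K)*ζ^23*δ^9 + (-864:K)*ζ^24*δ^6*d'^1 + (-6018:K)*ζ^24*δ^9 + (6102:K)*ζ^25*δ^9 + (5715/2:K)*ζ^26*δ^9 + (-6897/2:K)*ζ^27*δ^9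 + (-900:K)*ζ^28*δ^9 + (1530:K)*ζ^29*δ^9 + (120:K)*ζ^30*δ^9 + (-504:K)*ζ^31*δ^9 + (96:K)*ζ^33*δ^9) * hΦ
  · simp only [piY]
    linear_combination ((0:K)*d'^2 + (321489/2:K)*δ^3*d'^1 + (28431:K)*δ^6 + (0:K)*ζ^1*d'^2 + (120285:K)*ζ^1*δ^3*d'^1 + (21141:K)*ζ^1*δ^6 + (0:K)*ζ^2*d'^2 + (-120285:K)*ζ^2*δ^3*d'^1 + (-21141:K)*ζ^2*δ^6 + (0:K)*ζ^4*d'^2 + (181521:K)*ζ^4*δ^3*d'^1 + (64881/2:K)*ζ^4*δ^6 + (0:K)*ζ^5*d'^2 + (61236:K)*ζ^5*δ^3*d'^1 + (22599/2:K)*ζ^5*δ^6) * hδ3 + ((10935:K)*δ^3*d'^2 + (-75573:K)*δ^6*d'^1 + (-28431:K)*δ^9 + (6561/2:K)*ζ^1*δ^3*d'^2 + (-56133:K)*ζ^1*δ^6*d'^1 + (-21141:K)*ζ^1*δ^9 + (-6561:K)*ζ^2*δ^3*d'^2 + (111537/2:K)*ζ^2*δ^6*d'^1 + (21141:K)*ζ^2*δ^9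 + (729:K)*ζ^3*δ^3*d'^2 + (76545:K)*ζ^3*δ^6*d'^1 + (28395:K)*ζ^3*δ^9 + (15309/2:K)*ζ^4*δ^3*d'^2 + (-50301/2:K)*ζ^4*δ^6*d'^1 + (-22275/2:K)*ζ^4*δ^9 + (8748:K)*ζ^5*δ^3*d'^2 + (-96957:K)*ζ^5*δ^6*d'^1 + (-64935/2:K)*ζ^5*δ^9 + (3645/2:K)*ζ^6*δ^3*d'^2 + (14607/2:K)*ζ^6*δ^6*d'^1 + (-2037/2:K)*ζ^6*δ^9 + (2187:K)*ζ^7*δ^3*d'^2 + (117774:K)*ζ^7*δ^6*d'^1 + (67041/2:K)*ζ^7*δ^9 + (4374:K)*ζ^8*δ^3*d'^2 + (-3321:K)*ζ^8*δ^6*d'^1 + (28197/2:K)*ζ^8*δ^9 + (2916:K)*ζ^9*δ^3*d'^2 + (-109107:K)*ζ^9*δ^6*d'^1 + (-66327/2:K)*ζ^9*δ^9 + (23004:K)*ζ^10*δ^6*d'^1 + (-25614:K)*ζ^10*δ^9 + (202581/2:K)*ζ^11*δ^6*d'^1 + (33246:K)*ζ^11*δ^9 + (-5103/2:K)*ζ^12*δ^6*d'^1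 + (65109/2:K)*ζ^12*δ^9 + (-65529/2:K)*ζ^13*δ^6*d'^1 + (-33300:K)*ζ^13*δ^9 + (38961:K)*ζ^14*δ^6*d'^1 + (-33129:K)*ζ^14*δ^9 + (49302:K)*ζ^15*δ^6*d'^1 + (31263:K)*ζ^15*δ^9 + (14904:K)*ζ^16*δ^6*d'^1 + (56457/2:K)*ζ^16*δ^9 + (9882:K)*ζ^17*δ^6*d'^1 + (-52857/2:K)*ζ^17*δ^9 + (35235/2:K)*ζ^18*δ^6*d'^1 + (-42711/2:K)*ζ^18*δ^9 + (16362:K)*ζ^19*δ^6*d'^1 + (39951/2:K)*ζ^19*δ^9 + (9882:K)*ζ^20*δ^6*d'^1 + (30609/2:K)*ζ^20*δ^9 + (3888:K)*ζ^21*δ^6*d'^1 + (-27699/2:K)*ζ^21*δ^9 + (3240:K)*ζ^22*δ^6*d'^1 + (-20511/2:K)*ζ^22*δ^9 + (2592:K)*ζ^23*δ^6*d'^1 + (9342:K)*ζ^23*δ^9 + (864:K)*ζ^24*δ^6*d'^1 + (6018:K)*ζ^24*δ^9 + (-6102:K)*ζ^25*δ^9 + (-5715/2:K)*ζ^26*δ^9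 + (6897/2:K)*ζ^27*δ^9 + (900:K)*ζ^28*δ^9 + (-1530:K)*ζ^29*δ^9 + (-120:K)*ζ^30*δ^9 + (504:K)*ζ^31*δ^9 + (-96:K)*ζ^33*δ^9) * hΦ
  · simp only [piZ]
    linear_combination ((-157464:K)*δ^2*d'^1 + (-50301:K)*δ^5 + (-118098:K)*ζ^1*δ^2*d'^1 + (-37179:K)*ζ^1*δ^5 + (118098:K)*ζ^2*δ^2*d'^1 + (37179:K)*ζ^2*δ^5 + (-177147:K)*ζ^4*δ^2*d'^1 + (-56862:K)*ζ^4*δ^5 + (-59049:K)*ζ^5*δ^2*d'^1 + (-19683:K)*ζ^5*δ^5) * hδ3 + ((6561:K)*δ^5*d'^1 + (50301:K)*δ^8 + (8019:K)*ζ^1*δ^5*d'^1 + (37179:K)*ζ^1*δ^8 + (-11664:K)*ζ^2*δ^5*d'^1 + (-37179:K)*ζ^2*δ^8 + (-6561:K)*ζ^3*δ^5*d'^1 + (-50301:K)*ζ^3*δ^8 + (14337:K)*ζ^4*δ^5*d'^1 + (19251:K)*ζ^4*δ^8 + (-9720:K)*ζ^5*δ^5*d'^1 + (57726:K)*ζ^5*δ^8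 + (-22599:K)*ζ^6*δ^5*d'^1 + (1944:K)*ζ^6*δ^8 + (24300:K)*ζ^7*δ^5*d'^1 + (-61830:K)*ζ^7*δ^8 + (15552:K)*ζ^8*δ^5*d'^1 + (-23598:K)*ζ^8*δ^8 + (-29889:K)*ζ^9*δ^5*d'^1 + (65529:K)*ζ^9*δ^8 + (3645:K)*ζ^10*δ^5*d'^1 + (40257:K)*ζ^10*δ^8 + (29889:K)*ζ^11*δ^5*d'^1 + (-69660:K)*ζ^11*δ^8 + (-3645:K)*ζ^12*δ^5*d'^1 + (-45360:K)*ζ^12*δ^8 + (-15795:K)*ζ^13*δ^5*d'^1 + (71901:K)*ζ^13*δ^8 + (3888:K)*ζ^14*δ^5*d'^1 + (36666:K)*ζ^14*δ^8 + (5832:K)*ζ^15*δ^5*d'^1 + (-66825:K)*ζ^15*δ^8 + (-3888:K)*ζ^16*δ^5*d'^1 + (-20196:K)*ζ^16*δ^8 + (-3888:K)*ζ^17*δ^5*d'^1 + (52218:K)*ζ^17*δ^8 + (4941:K)*ζ^18*δ^8 + (-32481:K)*ζ^19*δ^8 + (3078:K)*ζ^20*δ^8 + (15228:K)*ζ^21*δ^8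 + (-3915:K)*ζ^22*δ^8 + (-4968:K)*ζ^23*δ^8 + (1944:K)*ζ^24*δ^8 + (864:K)*ζ^25*δ^8 + (-432:K)*ζ^26*δ^8) * hΦ
  · linear_combination -hδ
  · ring
end

section
/- Let d = 3d' with d' a nonzero rational number, and let v be a prime number not dividing d (i.e., the v-adic valuations of d and d' are zero and v ≠ 3). Then at least one of the following holds in ℚ_v: (i) 3 is a cube; (ii) d' is a cube; (iii) 3d is a cube; (iv) d is a cube and ℚ_v contains a primitive 9th root of unity; (v) d is a cube and ℚ_v contains a primitive cube root of unity ζ such that 3ζ is a cube. -/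
/-!
Let `d = 3d'` with `d'` a nonzero rational number, and let `v` be a prime number not
dividing `d` (i.e., the `v`-adic valuations of `d` and `d'` are zero and `v ≠ 3`).  Then
at least one of the following holds in `ℚ_v`: (i) 3 is a cube; (ii) `d'` is a cube;
(iii) `3d` is a cube; (iv) `d` is a cube and `ℚ_v` contains a primitive 9th root of
unity; (v) `d` is a cube and `ℚ_v` contains a primitive cube root of unity `ζ` such that
`3ζ` is a cube.
-/

lemma my_toZMod_ne_zero_iff {p : ℕ} [Fact p.Prime] (x : ℤ_[p]) :
    PadicInt.toZMod x ≠ 0 ↔ ‖x‖ = 1 := by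
  have h1 : PadicInt.toZMod x = 0 ↔ ‖x‖ < 1 := by
    rw [← RingHom.mem_ker, PadicInt.ker_toZMod, IsLocalRing.mem_maximalIdeal,
      PadicInt.mem_nonunits]
  constructor
  · intro h
    rcases lt_or_eq_of_le (PadicInt.norm_le_one x) with h' | h'
    · exact absurd (h1.mpr h') h
    · exact h'
  · intro h h0
    have := h1.mp h0
    rw [h] at this
    exact lt_irrefl _ this

lemma my_cube_lift {p : ℕ} [Fact p.Prime] (hp3 : p ≠ 3) (u : ℤ_[p]) (hu : ‖u‖ = 1)
    (x : ZMod p) (hx : x ^ 3 = PadicInt.toZMod u) :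
    ∃ s : ℤ_[p], s ^ 3 = u ∧ PadicInt.toZMod s = x := by
  have hxne : x ≠ 0 := by
    intro h
    rw [h] at hx
    exact ((my_toZMod_ne_zero_iff u).mpr hu) (by simpa using hx.symm)
  set a : ℤ_[p] := (x.val : ℤ_[p]) with ha
  have hta : PadicInt.toZMod a = x := by
    rw [ha, map_natCast, ZMod.natCast_val, ZMod.cast_id]
  have hna : ‖a‖ = 1 := (my_toZMod_ne_zero_iff a).mp (hta ▸ hxne)
  have h3 : ‖(3 : ℤ_[p])‖ = 1 := by
    apply (my_toZMod_ne_zero_iff _).mp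
    have : PadicInt.toZMod (3 : ℤ_[p]) = (3 : ZMod p) := map_ofNat _ 3
    rw [this]
    have : ((3 : ℕ) : ZMod p) ≠ 0 := by
      rw [Ne, ZMod.natCast_eq_zero_iff]
      intro hdvd
      exact hp3 ((Nat.prime_dvd_prime_iff_eq (Fact.out) (by norm_num)).mp hdvd)
    simpa using this
  set F : Polynomial ℤ_[p] := Polynomial.X ^ 3 - Polynomial.C u with hF
  have hFa : F.eval a = a ^ 3 - u := by simp [hF]
  have hF' : F.derivative = Polynomial.C 3 * Polynomial.X ^ 2 := by
    simp [hF]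
    rw [← Polynomial.C_1, ← Polynomial.C_add]; norm_num
  have hF'a : F.derivative.eval a = 3 * a ^ 2 := by simp [hF']
  have hder : ‖F.derivative.eval a‖ = 1 := by
    rw [hF'a, norm_mul, norm_pow, h3, hna]; norm_num
  have hnorm : ‖F.eval a‖ < ‖F.derivative.eval a‖ ^ 2 := by
    rw [hder, one_pow, hFa]
    have : PadicInt.toZMod (a ^ 3 - u) = 0 := by
      rw [map_sub, map_pow, hta, hx, sub_self]
    rcases lt_or_eq_of_le (PadicInt.norm_le_one (a ^ 3 - u)) with h' | h'
    · exact h'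
    · exact absurd h' (by intro hh; exact ((my_toZMod_ne_zero_iff _).mpr hh) this)
  obtain ⟨z, hz, hdist, -, -⟩ := hensels_lemma hnorm
  refine ⟨z, ?_, ?_⟩
  · simp only [hF, Polynomial.eval_sub, Polynomial.eval_pow, Polynomial.eval_X,
      Polynomial.eval_C, sub_eq_zero, map_sub, map_pow, Polynomial.aeval_X, Polynomial.aeval_C,
      Algebra.algebraMap_self, RingHom.id_apply] at hz
    exact hz
  · have hlt : ‖z - a‖ < 1 := hder ▸ hdist
    have : PadicInt.toZMod (z - a) = 0 := by
      by_contra hc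
      rw [(my_toZMod_ne_zero_iff _).mp hc] at hlt
      exact lt_irrefl _ hlt
    rw [map_sub, sub_eq_zero] at this
    rw [this, hta]

lemma my_norm_three {p : ℕ} [Fact p.Prime] (hp3 : p ≠ 3) : ‖(3 : ℤ_[p])‖ = 1 := by
  apply (my_toZMod_ne_zero_iff _).mp
  have h : PadicInt.toZMod (3 : ℤ_[p]) = (3 : ZMod p) := map_ofNat _ 3
  rw [h]
  have : ((3 : ℕ) : ZMod p) ≠ 0 := by
    rw [Ne, ZMod.natCast_eq_zero_iff]
    intro hdvd
    exact hp3 ((Nat.prime_dvd_prime_iff_eq (Fact.out) (by norm_num)).mp hdvd)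
  simpa using this

lemma mod3_key (a b : ℕ) (ha : ¬ a % 3 = 0) (hb : ¬ b % 3 = 0) :
    (2 * a + b) % 3 = 0 ∨ (a + b) % 3 = 0 := by
  have h1 : a % 3 = 1 ∨ a % 3 = 2 := by omega
  have h2 : b % 3 = 1 ∨ b % 3 = 2 := by omega
  rw [Nat.add_mod, Nat.mul_mod, Nat.add_mod a b]
  rcases h1 with h1 | h1 <;> rcases h2 with h2 | h2 <;> rw [h1, h2] <;> simp

lemma mod3_key2 (a m : ℕ) (ha : ¬ a % 3 = 0) (hm : ¬ m % 3 = 0) :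
    (a + m) % 3 = 0 ∨ (a + 2 * m) % 3 = 0 := by
  have h1 : a % 3 = 1 ∨ a % 3 = 2 := by omega
  have h2 : m % 3 = 1 ∨ m % 3 = 2 := by omega
  rw [Nat.add_mod a m, Nat.add_mod a (2*m), Nat.mul_mod 2 m]
  rcases h1 with h1 | h1 <;> rcases h2 with h2 | h2 <;> rw [h1, h2] <;> simp

theorem local_cube_conditions (d d' : ℚ) (hd' : d' ≠ 0) (hd : d = 3 * d')
    (v : ℕ) [hv : Fact v.Prime] (hvd : padicValRat v d = 0)
    (hvd' : padicValRat v d' = 0) (hv3 : v ≠ 3) :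
    (∃ s : ℚ_[v], s ^ 3 = 3) ∨
    (∃ s : ℚ_[v], s ^ 3 = (d' : ℚ_[v])) ∨
    (∃ s : ℚ_[v], s ^ 3 = 3 * (d : ℚ_[v])) ∨
    ((∃ s : ℚ_[v], s ^ 3 = (d : ℚ_[v])) ∧ ∃ ζ : ℚ_[v], IsPrimitiveRoot ζ 9) ∨
    ((∃ s : ℚ_[v], s ^ 3 = (d : ℚ_[v])) ∧
      ∃ ζ : ℚ_[v], IsPrimitiveRoot ζ 3 ∧ ∃ s : ℚ_[v], s ^ 3 = 3 * ζ) := by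
  have hcast' : (d' : ℚ_[v]) ≠ 0 := Rat.cast_ne_zero.mpr hd'
  have hnd' : ‖(d' : ℚ_[v])‖ = 1 := by
    rw [Padic.norm_eq_zpow_neg_valuation hcast', Padic.valuation_ratCast, hvd']
    simp
  set D' : ℤ_[v] := ⟨(d' : ℚ_[v]), hnd'.le⟩ with hD'def
  have hD'norm : ‖D'‖ = 1 := by rw [PadicInt.norm_def]; exact hnd'
  have h3norm : ‖(3 : ℤ_[v])‖ = 1 := my_norm_three hv3
  have hdcast : (d : ℚ_[v]) = 3 * (d' : ℚ_[v]) := by rw [hd]; push_cast; ring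
  have hD'coe : ((D' : ℤ_[v]) : ℚ_[v]) = (d' : ℚ_[v]) := rfl
  have h3coe : (((3 : ℤ_[v]) : ℚ_[v])) = 3 := by norm_cast
  have h3Zne : PadicInt.toZMod (3 : ℤ_[v]) ≠ 0 := (my_toZMod_ne_zero_iff _).mpr h3norm
  have hD'Zne : PadicInt.toZMod D' ≠ 0 := (my_toZMod_ne_zero_iff _).mpr hD'norm
  set t3 : (ZMod v)ˣ := Units.mk0 _ h3Zne with ht3
  set tD' : (ZMod v)ˣ := Units.mk0 _ hD'Zne with htD'
  by_cases h3N : (3 : ℕ) ∣ Nat.card (ZMod v)ˣ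
  · -- 3 divides the card: cyclic analysis
    obtain ⟨g, hg⟩ := IsCyclic.exists_generator (α := (ZMod v)ˣ)
    have hog : orderOf g = Nat.card (ZMod v)ˣ := orderOf_eq_card_of_forall_mem_zpowers hg
    set N := Nat.card (ZMod v)ˣ with hNdef
    set m := N / 3 with hmdef
    have hN3 : 3 * m = N := Nat.mul_div_cancel' h3N
    have hNpos : 0 < N := Nat.card_pos
    have hmN : 0 < m ∧ m < N := by omega
    have hpow : ∀ x : (ZMod v)ˣ, ∃ k : ℕ, g ^ k = x := by
      intro x
      have hfin : IsOfFinOrder g := isOfFinOrder_of_finite g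
      have := hfin.mem_powers_iff_mem_zpowers.mpr (hg x)
      obtain ⟨k, hk⟩ := Submonoid.mem_powers_iff x g |>.mp this
      exact ⟨k, hk⟩
    obtain ⟨a, hga⟩ := hpow t3
    obtain ⟨b, hgb⟩ := hpow tD'
    have hgN : g ^ N = 1 := by rw [← hog]; exact pow_orderOf_eq_one g
    have cube_of : ∀ k : ℕ, 3 ∣ k → ∃ y : (ZMod v)ˣ, y ^ 3 = g ^ k := by
      rintro k ⟨c, rfl⟩
      exact ⟨g ^ c, by rw [← pow_mul, mul_comm]⟩
    have liftQ : ∀ (u : ℤ_[v]), ‖u‖ = 1 → ∀ k : ℕ,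
        PadicInt.toZMod u = ((g ^ k : (ZMod v)ˣ) : ZMod v) → 3 ∣ k → ∃ s : ℤ_[v], s ^ 3 = u := by
      intro u hu k hk h3k
      obtain ⟨y, hy⟩ := cube_of k h3k
      obtain ⟨s, hs, -⟩ := my_cube_lift hv3 u hu (y : ZMod v)
        (by rw [← Units.val_pow_eq_pow_val, hy, ← hk])
      exact ⟨s, hs⟩
    by_cases ha3 : a % 3 = 0
    · left
      obtain ⟨s, hs⟩ := liftQ (3 : ℤ_[v]) h3norm a
        (by rw [hga, ht3, Units.val_mk0]) (Nat.dvd_of_mod_eq_zero ha3)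
      exact ⟨(s : ℚ_[v]), by rw [← PadicInt.coe_pow, hs, h3coe]⟩
    by_cases hb3 : b % 3 = 0
    · right; left
      obtain ⟨s, hs⟩ := liftQ D' hD'norm b
        (by rw [hgb, htD', Units.val_mk0]) (Nat.dvd_of_mod_eq_zero hb3)
      exact ⟨(s : ℚ_[v]), by rw [← PadicInt.coe_pow, hs, hD'coe]⟩
    -- residue of d = 3 d' : g^(a+b); residue of 3d = 9 d' : g^(2a+b)
    have habsplit : (2 * a + b) % 3 = 0 ∨ (a + b) % 3 = 0 := mod3_key a b ha3 hb3
    rcases habsplit with hab | hab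
    · right; right; left
      have hu : ‖(3 : ℤ_[v]) ^ 2 * D'‖ = 1 := by
        rw [norm_mul, norm_pow, h3norm, hD'norm]; norm_num
      obtain ⟨s, hs⟩ := liftQ ((3 : ℤ_[v]) ^ 2 * D') hu (2 * a + b)
        (by
          rw [map_mul, map_pow, pow_add, mul_comm 2 a, pow_mul, hga, hgb, Units.val_mul,
            Units.val_pow_eq_pow_val, ht3, htD', Units.val_mk0, Units.val_mk0])
        (Nat.dvd_of_mod_eq_zero hab)
      refine ⟨(s : ℚ_[v]), ?_⟩
      rw [← PadicInt.coe_pow, hs, PadicInt.coe_mul, PadicInt.coe_pow, h3coe, hD'coe, hdcast]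
      ring
    · -- d is a cube
      have hu : ‖(3 : ℤ_[v]) * D'‖ = 1 := by
        rw [norm_mul, h3norm, hD'norm]; norm_num
      have h3D'res : PadicInt.toZMod ((3 : ℤ_[v]) * D') = ((g ^ (a + b) : (ZMod v)ˣ) : ZMod v) := by
        rw [map_mul, pow_add, hga, hgb, Units.val_mul, ht3, htD', Units.val_mk0, Units.val_mk0]
      obtain ⟨sd, hsd⟩ := liftQ ((3 : ℤ_[v]) * D') hu (a + b) h3D'res
        (Nat.dvd_of_mod_eq_zero hab)
      have hdc : ∃ s : ℚ_[v], s ^ 3 = (d : ℚ_[v]) := by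
        refine ⟨(sd : ℚ_[v]), ?_⟩
        rw [← PadicInt.coe_pow, hsd, PadicInt.coe_mul, h3coe, hD'coe, hdcast]
      -- construct the cube root of unity
      have hgm3 : (g ^ m) ^ 3 = 1 := by rw [← pow_mul, mul_comm, hN3, hgN]
      have hgmne : g ^ m ≠ 1 := by
        intro h
        have := orderOf_dvd_of_pow_eq_one h
        rw [hog] at this
        have := Nat.le_of_dvd hmN.1 this
        omega
      have hxcube : ((g ^ m : (ZMod v)ˣ) : ZMod v) ^ 3 = PadicInt.toZMod (1 : ℤ_[v]) := by
        rw [map_one, ← Units.val_pow_eq_pow_val, hgm3, Units.val_one]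
      obtain ⟨z, hz3, hzres⟩ := my_cube_lift hv3 (1 : ℤ_[v]) (by simp) _ hxcube
      have hznorm : ‖z‖ = 1 := (my_toZMod_ne_zero_iff z).mp (by rw [hzres]; exact Units.ne_zero _)
      have hzne1 : (z : ℚ_[v]) ≠ 1 := by
        intro h
        have : z = 1 := Subtype.ext (by simpa using h)
        rw [this, map_one] at hzres
        exact hgmne (Units.ext hzres.symm)
      have hzQ3 : ((z : ℚ_[v])) ^ 3 = 1 := by rw [← PadicInt.coe_pow, hz3, PadicInt.coe_one]
      by_cases hm3 : m % 3 = 0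
      · -- 9th root of unity: cube root of z
        right; right; right; left
        obtain ⟨s, hs⟩ := liftQ z hznorm m hzres (Nat.dvd_of_mod_eq_zero hm3)
        refine ⟨hdc, (s : ℚ_[v]), ?_⟩
        have h9 : ((s : ℚ_[v])) ^ 9 = 1 := by
          rw [show (9 : ℕ) = 3 * 3 from rfl, pow_mul, ← PadicInt.coe_pow, hs, hzQ3]
        have h3ne : ((s : ℚ_[v])) ^ 3 ≠ 1 := by rw [← PadicInt.coe_pow, hs]; exact hzne1
        have ho9 : orderOf ((s : ℚ_[v])) ∣ 9 := orderOf_dvd_of_pow_eq_one h9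
        have ho3 : ¬ orderOf ((s : ℚ_[v])) ∣ 3 := by
          intro h
          exact h3ne (orderOf_dvd_iff_pow_eq_one.mp h)
        have : orderOf ((s : ℚ_[v])) = 9 := by
          have hle := Nat.le_of_dvd (by norm_num) ho9
          interval_cases h : (orderOf ((s : ℚ_[v]))) <;> revert ho9 ho3 <;> decide
        rw [← this]
        exact IsPrimitiveRoot.orderOf _
      · -- primitive cube root  ζ = z  (or z^2) with 3ζ a cube
        right; right; right; right
        have hzprim : IsPrimitiveRoot ((z : ℚ_[v])) 3 := by
          have hdvd : orderOf ((z : ℚ_[v])) ∣ 3 := orderOf_dvd_of_pow_eq_one hzQ3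
          rcases (Nat.Prime.eq_one_or_self_of_dvd (by norm_num) _ hdvd) with h | h
          · exact absurd (orderOf_eq_one_iff.mp h) hzne1
          · rw [← h]; exact IsPrimitiveRoot.orderOf _
        have hwhich : (a + m) % 3 = 0 ∨ (a + 2 * m) % 3 = 0 := mod3_key2 a m ha3 hm3
        rcases hwhich with hc | hc
        · have hu2 : ‖(3 : ℤ_[v]) * z‖ = 1 := by
            rw [norm_mul, h3norm, hznorm]; norm_num
          obtain ⟨s, hs⟩ := liftQ ((3 : ℤ_[v]) * z) hu2 (a + m)
            (by rw [map_mul, pow_add, hga, hzres, Units.val_mul, ht3, Units.val_mk0])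
            (Nat.dvd_of_mod_eq_zero hc)
          refine ⟨hdc, (z : ℚ_[v]), hzprim, (s : ℚ_[v]), ?_⟩
          rw [← PadicInt.coe_pow, hs, PadicInt.coe_mul, h3coe]
        · have hu2 : ‖(3 : ℤ_[v]) * z ^ 2‖ = 1 := by
            rw [norm_mul, norm_pow, h3norm, hznorm]; norm_num
          obtain ⟨s, hs⟩ := liftQ ((3 : ℤ_[v]) * z ^ 2) hu2 (a + 2 * m)
            (by
              simp only [map_mul, map_pow, hzres, pow_add, mul_comm 2 m, pow_mul, hga, ht3,
                Units.val_mul, Units.val_pow_eq_pow_val, Units.val_mk0])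
            (Nat.dvd_of_mod_eq_zero hc)
          refine ⟨hdc, (z : ℚ_[v]) ^ 2, hzprim.pow_of_coprime 2 (by norm_num), (s : ℚ_[v]), ?_⟩
          rw [← PadicInt.coe_pow, hs, PadicInt.coe_mul, PadicInt.coe_pow, h3coe]
  · -- 3 does not divide the card: everything is a cube, in particular 3
    left
    have hco : (Nat.card (ZMod v)ˣ).Coprime 3 :=
      Nat.coprime_comm.mp ((Nat.Prime.coprime_iff_not_dvd (by norm_num)).mpr h3N)
    obtain ⟨y, hy⟩ := (powCoprime hco).surjective t3
    have hy3 : y ^ 3 = t3 := hy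
    obtain ⟨s, hs, -⟩ := my_cube_lift hv3 (3 : ℤ_[v]) h3norm (y : ZMod v)
      (by rw [← Units.val_pow_eq_pow_val, hy3, ht3, Units.val_mk0])
    exact ⟨(s : ℚ_[v]), by rw [← PadicInt.coe_pow, hs, h3coe]⟩
end

section
/- Let Γ be a group, let A be a Γ-module whose underlying abelian group is divisible, let m, n ≥ 1 be integers, and let δ_n : A^Γ → H¹(Γ, A[n]) be the connecting homomorphism arising from the multiplication-by-n sequence 0 → A[n] → A → A → 0. Let ρ ∈ A^Γ. (1) If there exists τ ∈ (A^Γ)[m] with δ_n(ρ) = δ_n(τ), then m·ρ ∈ mn·A^Γ. (2) If the image of δ_n(ρ) under the map H¹(Γ, A[n]) → H¹(Γ, A[mn]) induced by the inclusion A[n] ⊆ A[mn] is nonzero, then m·ρ ∉ mn·A^Γ. -/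
/-!
Let `Γ` be a group, let `A` be a `Γ`-module whose underlying abelian group is divisible,
let `m, n ≥ 1` be integers, and let `δ_n : A^Γ → H¹(Γ, A[n])` be the connecting
homomorphism arising from the multiplication-by-`n` sequence `0 → A[n] → A → A → 0`.
Let `ρ ∈ A^Γ`.
(1) If there exists `τ ∈ (A^Γ)[m]` with `δ_n(ρ) = δ_n(τ)`, then `m•ρ ∈ mn•A^Γ`.
(2) If the image of `δ_n(ρ)` under the map `H¹(Γ, A[n]) → H¹(Γ, A[mn])` induced by the
inclusion `A[n] ⊆ A[mn]` is nonzero, then `m•ρ ∉ mn•A^Γ`.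

We describe `H¹(Γ, A[k])` concretely as 1-cocycles valued in the `k`-torsion of `A`
modulo 1-coboundaries of `k`-torsion elements, and `δ_n` by its usual cocycle
description.
-/


variable (Γ : Type*) [Group Γ] (A : Type*) [AddCommGroup A] [DistribMulAction Γ A]

/-- The group of 1-cocycles of `Γ` valued in the `n`-torsion subgroup `A[n]` of `A`. -/
def Z1 (n : ℕ) : AddSubgroup (Γ → A) where
  carrier := {f | (∀ g h : Γ, f (g * h) = f g + g • f h) ∧ ∀ g : Γ, n • f g = 0}
  zero_mem' := ⟨fun g h => by simp, fun g => by simp⟩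
  add_mem' := by
    rintro f₁ f₂ ⟨hf₁, hf₁'⟩ ⟨hf₂, hf₂'⟩
    refine ⟨fun g h => by simp only [Pi.add_apply, hf₁ g h, hf₂ g h, smul_add]; abel,
      fun g => by simp only [Pi.add_apply, smul_add, hf₁' g, hf₂' g, add_zero]⟩
  neg_mem' := by
    rintro f ⟨hf, hf'⟩
    refine ⟨fun g h => by simp only [Pi.neg_apply, hf g h, smul_neg]; abel,
      fun g => by simp only [Pi.neg_apply, smul_neg, hf' g, neg_zero]⟩

/-- The group of 1-coboundaries of `Γ` valued in the `n`-torsion subgroup `A[n]` of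
`A`. -/
def B1 (n : ℕ) : AddSubgroup (Γ → A) where
  carrier := {f | ∃ a : A, n • a = 0 ∧ ∀ g : Γ, f g = g • a - a}
  zero_mem' := ⟨0, by simp, fun g => by simp⟩
  add_mem' := by
    rintro f₁ f₂ ⟨a₁, ha₁, hf₁⟩ ⟨a₂, ha₂, hf₂⟩
    exact ⟨a₁ + a₂, by rw [smul_add, ha₁, ha₂, add_zero],
      fun g => by rw [Pi.add_apply, hf₁ g, hf₂ g, smul_add]; abel⟩
  neg_mem' := by
    rintro f ⟨a, ha, hf⟩
    exact ⟨-a, by rw [smul_neg, ha, neg_zero],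
      fun g => by rw [Pi.neg_apply, hf g, smul_neg]; abel⟩

/-- The first cohomology group `H¹(Γ, A[n])` of `Γ` with coefficients in the `n`-torsion
submodule `A[n]` of `A`, described as 1-cocycles modulo 1-coboundaries. -/
def H1 (n : ℕ) := Z1 Γ A n ⧸ (B1 Γ A n).addSubgroupOf (Z1 Γ A n)

instance (n : ℕ) : AddCommGroup (H1 Γ A n) :=
  inferInstanceAs (AddCommGroup (Z1 Γ A n ⧸ (B1 Γ A n).addSubgroupOf (Z1 Γ A n)))

variable {A} in
/-- The 1-coboundary of an element `a` of `A`. -/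
def cocycleOf (a : A) : Γ → A := fun g => g • a - a

variable {Γ A} in
lemma cocycleOf_mem_Z1 {n : ℕ} {a : A} (h : ∀ g : Γ, n • (g • a) = n • a) :
    cocycleOf Γ a ∈ Z1 Γ A n := by
  constructor
  · intro g h'
    simp only [cocycleOf, mul_smul, smul_sub]
    abel
  · intro g
    rw [cocycleOf, smul_sub, h g, sub_self]

/-- The class in `H¹(Γ, A[n])` of the 1-coboundary of an element `a` of `A` whose
multiple `n • a` is `Γ`-invariant. -/
def H1mkOf (n : ℕ) (a : A) (h : ∀ g : Γ, n • (g • a) = n • a) : H1 Γ A n :=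
  QuotientAddGroup.mk ⟨cocycleOf Γ a, cocycleOf_mem_Z1 h⟩

/-- The connecting homomorphism `δ_n : A^Γ → H¹(Γ, A[n])` arising from the short exact
sequence `0 → A[n] → A → A → 0` given by multiplication by `n` on a divisible `A`, as a
function on all of `A` (junk value `0` if the input is not invariant or not divisible
by `n`). -/
noncomputable def deltaFun (n : ℕ) (ρ : A) : H1 Γ A n :=
  letI := Classical.propDecidable ((∀ g : Γ, g • ρ = ρ) ∧ ∃ a : A, n • a = ρ)
  if h : (∀ g : Γ, g • ρ = ρ) ∧ ∃ a : A, n • a = ρ then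
    H1mkOf Γ A n h.2.choose (fun g => by
      rw [← smul_comm g n, h.2.choose_spec, h.1 g])
  else 0

variable {Γ A} in
lemma Z1_mono {m n : ℕ} : Z1 Γ A n ≤ Z1 Γ A (m * n) := by
  rintro f ⟨hf, hf'⟩
  exact ⟨hf, fun g => by rw [mul_smul, hf' g, smul_zero]⟩

/-- The map `H¹(Γ, A[n]) → H¹(Γ, A[mn])` induced by the inclusion `A[n] ⊆ A[mn]`. -/
def jH1 (m n : ℕ) : H1 Γ A n →+ H1 Γ A (m * n) :=
  QuotientAddGroup.map _ _ (AddSubgroup.inclusion Z1_mono) (by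
    rintro ⟨f, hfZ⟩ hf
    obtain ⟨a, ha, hfa⟩ := hf
    exact ⟨a, by rw [mul_smul, ha, smul_zero], hfa⟩)


variable {Γ A} in
lemma deltaFun_eq_H1mkOf (n : ℕ) (ρ : A) (hρ : ∀ g : Γ, g • ρ = ρ)
    (a : A) (ha : n • a = ρ) :
    deltaFun Γ A n ρ = H1mkOf Γ A n a
      (fun g => by rw [← smul_comm g n, ha, hρ g]) := by
  rw [deltaFun]
  have hex : ∃ a : A, n • a = ρ := ⟨a, ha⟩
  rw [dif_pos ⟨hρ, hex⟩]
  set b := (And.intro hρ hex).2.choose with hb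
  have hbs : n • b = ρ := (And.intro hρ hex).2.choose_spec
  unfold H1mkOf
  erw [QuotientAddGroup.eq]
  rw [AddSubgroup.mem_addSubgroupOf]
  refine ⟨a - b, ?_, fun g => ?_⟩
  · rw [smul_sub, ha, hbs, sub_self]
  · show (-cocycleOf Γ b + cocycleOf Γ a) g = _
    simp only [Pi.add_apply, Pi.neg_apply, cocycleOf, smul_sub]
    abel

theorem locally_divisible_iff_delta_in_kernel
    (hdiv : ∀ k : ℕ, 0 < k → ∀ a : A, ∃ b : A, k • b = a)
    (m n : ℕ) (hm : 0 < m) (hn : 0 < n)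
    (ρ : A) (hρ : ∀ g : Γ, g • ρ = ρ) :
    -- (1) if `δ_n(ρ) = δ_n(τ)` for some `τ ∈ (A^Γ)[m]`, then `m • ρ ∈ mn • A^Γ`:
    ((∃ τ : A, m • τ = 0 ∧ (∀ g : Γ, g • τ = τ) ∧ deltaFun Γ A n ρ = deltaFun Γ A n τ) →
      ∃ σ : A, (∀ g : Γ, g • σ = σ) ∧ m • ρ = (m * n) • σ) ∧
    -- (2) if the image of `δ_n(ρ)` in `H¹(Γ, A[mn])` is nonzero, then `m • ρ ∉ mn • A^Γ`:
    (jH1 Γ A m n (deltaFun Γ A n ρ) ≠ 0 →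
      ¬∃ σ : A, (∀ g : Γ, g • σ = σ) ∧ m • ρ = (m * n) • σ) := by
  obtain ⟨a, ha⟩ := hdiv n hn ρ
  have hdelta := deltaFun_eq_H1mkOf n ρ hρ a ha
  constructor
  · rintro ⟨τ, hτm, hτinv, hδ⟩
    obtain ⟨b, hb⟩ := hdiv n hn τ
    have hδτ := deltaFun_eq_H1mkOf n τ hτinv b hb
    rw [hdelta, hδτ] at hδ
    unfold H1mkOf at hδ
    erw [QuotientAddGroup.eq, AddSubgroup.mem_addSubgroupOf] at hδ
    obtain ⟨c, hc, hfc⟩ := hδ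
    refine ⟨a + c - b, fun g => ?_, ?_⟩
    · have hrel : -(cocycleOf Γ a g) + cocycleOf Γ b g = g • c - c := hfc g
      simp only [cocycleOf] at hrel
      have hgc : g • c - c = (g • b - b) - (g • a - a) := by
        rw [← hrel]; abel
      have h1 : g • (a + c - b) - (a + c - b) =
          (g • a - a) + (g • c - c) - (g • b - b) := by
        simp only [smul_sub, smul_add]; abel
      rw [hgc] at h1
      have h0 : g • (a + c - b) - (a + c - b) = 0 := by rw [h1]; abel
      exact sub_eq_zero.mp h0
    · have : (m * n) • (a + c - b) = m • (n • a) + m • (n • c) - m • (n • b) := by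
        simp only [smul_sub, smul_add, mul_smul]
      rw [this, ha, hb, hc, smul_zero, hτm]
      abel
  · rintro hne ⟨σ, hσinv, hσ⟩
    apply hne
    rw [hdelta]
    unfold H1mkOf jH1
    erw [QuotientAddGroup.map_mk]
    erw [QuotientAddGroup.eq_zero_iff, AddSubgroup.mem_addSubgroupOf]
    refine ⟨a - σ, ?_, fun g => ?_⟩
    · rw [smul_sub, ← hσ, mul_smul, ha]
      simp
    · show cocycleOf Γ a g = _
      rw [cocycleOf, smul_sub, hσinv g]
      abel
end

section
/- Let Γ be a group, let (Γ_i)_{i ∈ I} be a family of subgroups of Γ, let A be a Γ-module whose underlying abelian group is divisible, let n ≥ 1 and r ≥ 0 be integers. Suppose that the only class in H^{r+1}(Γ, A[n]) whose restriction to H^{r+1}(Γ_i, A[n]) is zero for all i ∈ I is the zero class. Then every ρ ∈ H^r(Γ, A) whose restriction to H^r(Γ_i, A) lies in n·H^r(Γ_i, A) for every i ∈ I satisfies ρ ∈ n·H^r(Γ, A). -/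
/-!
Let `Γ` be a group, let `(Γᵢ)_{i ∈ I}` be a family of subgroups of `Γ`, let `A` be a
`Γ`-module whose underlying abelian group is divisible, let `n ≥ 1` and `r ≥ 0` be
integers.  Suppose that the only class in `H^{r+1}(Γ, A[n])` whose restriction to
`H^{r+1}(Γᵢ, A[n])` is zero for all `i ∈ I` is the zero class.  Then every
`ρ ∈ H^r(Γ, A)` whose restriction to `H^r(Γᵢ, A)` lies in `n·H^r(Γᵢ, A)` for every
`i ∈ I` satisfies `ρ ∈ n·H^r(Γ, A)`.

Group cohomology is realized by the complex of inhomogeneous cochains: `C^r(Γ, M)` is the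
group of functions `(Fin r → Γ) → M` with the usual differential, `H^r(Γ, M)` is the
quotient of the `r`-cocycles by the `r`-coboundaries, and restriction to a subgroup is
induced by precomposition of cochains.
-/

section GroupCohomology

variable (Γ : Type*) [Group Γ] (M : Type*) [AddCommGroup M] [DistribMulAction Γ M]

/-- The differential on inhomogeneous cochains of `Γ` with coefficients in `M`. -/
def cochainD (r : ℕ) : ((Fin r → Γ) → M) →+ ((Fin (r + 1) → Γ) → M) where
  toFun f g := g 0 • f (fun i => g i.succ) +
    ∑ j : Fin (r + 1), (-1 : ℤ) ^ ((j : ℕ) + 1) • f (Fin.contractNth j (· * ·) g)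
  map_zero' := by ext g; simp
  map_add' f₁ f₂ := by
    ext g
    simp only [Pi.add_apply, smul_add, Finset.sum_add_distrib]
    abel

/-- The subgroup of `r`-cocycles. -/
def cocycles (r : ℕ) : AddSubgroup ((Fin r → Γ) → M) := (cochainD Γ M r).ker

/-- The subgroup of `r`-coboundaries. -/
def coboundaries : (r : ℕ) → AddSubgroup ((Fin r → Γ) → M)
  | 0 => ⊥
  | (r + 1) => (cochainD Γ M r).range

/-- The `r`-th group cohomology `H^r(Γ, M)`, as `r`-cocycles modulo `r`-coboundaries. -/
def Hr (r : ℕ) :=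
  cocycles Γ M r ⧸ (coboundaries Γ M r).addSubgroupOf (cocycles Γ M r)

instance (r : ℕ) : AddCommGroup (Hr Γ M r) :=
  inferInstanceAs
    (AddCommGroup (cocycles Γ M r ⧸ (coboundaries Γ M r).addSubgroupOf (cocycles Γ M r)))

variable (Δ : Subgroup Γ)

/-- Restriction of inhomogeneous cochains to a subgroup `Δ ≤ Γ`. -/
def resC (r : ℕ) : ((Fin r → Γ) → M) →+ ((Fin r → ↥Δ) → M) where
  toFun f g := f (fun i => (g i : Γ))
  map_zero' := rfl
  map_add' _ _ := rfl

lemma coe_contractNth (r : ℕ) (j : Fin (r + 1)) (g : Fin (r + 1) → ↥Δ) (i : Fin r) :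
    ((Fin.contractNth j (· * ·) g i : ↥Δ) : Γ) =
      Fin.contractNth j (· * ·) (fun k => (g k : Γ)) i := by
  unfold Fin.contractNth
  split_ifs <;> simp

lemma resC_comm_d (r : ℕ) (f : (Fin r → Γ) → M) :
    cochainD ↥Δ M r (resC Γ M Δ r f) = resC Γ M Δ (r + 1) (cochainD Γ M r f) := by
  funext g
  show (g 0 : Γ) • f _ + _ = (g 0 : Γ) • f _ + _
  congr 1
  refine Finset.sum_congr rfl fun j _ => ?_
  show (-1 : ℤ) ^ ((j : ℕ) + 1) • f (fun i => ((Fin.contractNth j (· * ·) g i : ↥Δ) : Γ)) =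
    (-1 : ℤ) ^ ((j : ℕ) + 1) • f (Fin.contractNth j (· * ·) fun k => (g k : Γ))
  rw [funext fun i => coe_contractNth Γ Δ r j g i]

/-- Restriction of cocycles to a subgroup `Δ ≤ Γ`. -/
def resZ (r : ℕ) : ↥(cocycles Γ M r) →+ ↥(cocycles ↥Δ M r) :=
  AddMonoidHom.codRestrict ((resC Γ M Δ r).comp (cocycles Γ M r).subtype) _ (fun f => by
    have hf : cochainD Γ M r f.1 = 0 := f.2
    show ((resC Γ M Δ r).comp (cocycles Γ M r).subtype) f ∈ (cochainD ↥Δ M r).ker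
    rw [AddMonoidHom.mem_ker]
    show cochainD ↥Δ M r (resC Γ M Δ r f.1) = 0
    rw [resC_comm_d, hf]
    rfl)

/-- The restriction map `H^r(Γ, M) → H^r(Δ, M)` for a subgroup `Δ ≤ Γ`. -/
def resH (r : ℕ) : Hr Γ M r →+ Hr ↥Δ M r :=
  QuotientAddGroup.map _ _ (resZ Γ M Δ r) (by
    intro f hf
    rw [AddSubgroup.mem_addSubgroupOf] at hf
    rw [AddSubgroup.mem_comap, AddSubgroup.mem_addSubgroupOf]
    cases r with
    | zero =>
      have h0 : f.1 = 0 := AddSubgroup.mem_bot.mp hf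
      show resC Γ M Δ 0 f.1 ∈ (⊥ : AddSubgroup ((Fin 0 → ↥Δ) → M))
      rw [h0, map_zero]
      exact AddSubgroup.zero_mem ⊥
    | succ r =>
      obtain ⟨f', hf'⟩ := hf
      refine AddMonoidHom.mem_range.mpr ⟨resC Γ M Δ r f', ?_⟩
      show cochainD ↥Δ M r _ = resC Γ M Δ (r + 1) f.1
      rw [resC_comm_d, hf'])

end GroupCohomology

/-- The `n`-torsion subgroup `A[n]` of `A`. -/
def torsion (A : Type*) [AddCommGroup A] (n : ℕ) : AddSubgroup A where
  carrier := {a | n • a = 0}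
  zero_mem' := by simp
  add_mem' := by
    intro a b ha hb
    show n • (a + b) = 0
    rw [smul_add, ha, hb, add_zero]
  neg_mem' := by
    intro a ha
    show n • (-a) = 0
    rw [smul_neg, ha, neg_zero]

/-- The `Γ`-module structure on the `n`-torsion subgroup `A[n]` of a `Γ`-module `A`. -/
instance torsion.instDistribMulAction (Γ : Type*) [Group Γ] (A : Type*) [AddCommGroup A]
    [DistribMulAction Γ A] (n : ℕ) : DistribMulAction Γ ↥(torsion A n) where
  smul g a := ⟨g • (a : A), by
    show n • (g • (a : A)) = 0
    rw [← smul_comm g n (a : A), show n • (a : A) = 0 from a.2, smul_zero]⟩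
  one_smul a := Subtype.ext (one_smul Γ (a : A))
  mul_smul g h a := Subtype.ext (mul_smul g h (a : A))
  smul_zero g := Subtype.ext (smul_zero g)
  smul_add g a b := Subtype.ext (smul_add g (a : A) (b : A))

/- ===== auxiliary developments ===== -/

noncomputable section DSq
universe v w
variable (Γ : Type v) [Group Γ] (M : Type w) [AddCommGroup M] [DistribMulAction Γ M]

private def uRep : Rep (ULift.{max v w} ℤ) (ULift.{w} Γ) :=
  Rep.of (X := ULift.{v} M)
    { toFun := fun g =>
        { toFun := fun x => ULift.up (g.down • x.down)
          map_add' := fun a b => congrArg ULift.up (smul_add _ _ _)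
          map_smul' := fun z x => congrArg ULift.up
            ((smul_comm z.down g.down x.down).symm : g.down • z.down • x.down = _) }
      map_one' := by ext x; exact congrArg ULift.down (congrArg ULift.up (one_smul Γ x.down))
      map_mul' := fun g h => by ext x; exact congrArg ULift.down (congrArg ULift.up
        (mul_smul g.down h.down x.down)) }

private def dpr : ULift.{v} M →+ M where
  toFun := ULift.down
  map_zero' := rfl
  map_add' _ _ := rfl

private lemma uRep_d_apply (m : ℕ) (f : (Fin m → Γ) → M) (g : Fin (m + 1) → ULift.{w} Γ) :
    (inhomogeneousCochains.d (uRep Γ M) m).hom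
      (fun t => ULift.up (f fun i => (t i).down)) g
      = ULift.up (cochainD Γ M m f (fun i => (g i).down)) := by
  refine ULift.ext _ _ ?_
  show (g 0).down • (f fun i => (g i.succ).down) +
      dpr M (∑ j : Fin (m + 1), (-1 : ULift.{max v w} ℤ) ^ ((j : ℕ) + 1) •
        (ULift.up (f fun i => (Fin.contractNth j (· * ·) g i).down) : ULift.{v} M)) = _ + _
  rw [map_sum]
  refine congrArg₂ (· + ·) rfl (Finset.sum_congr rfl fun j _ => ?_)
  show ((-1 : ULift.{max v w} ℤ) ^ ((j : ℕ) + 1)).down •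
      (f fun i => (Fin.contractNth j (· * ·) g i).down) = _
  have hc : (fun i => (Fin.contractNth j (· * ·) g i).down)
      = Fin.contractNth j (· * ·) (fun k => (g k).down) := by
    funext i; unfold Fin.contractNth; split_ifs <;> rfl
  have hp : ((-1 : ULift.{max v w} ℤ) ^ ((j : ℕ) + 1)).down = (-1 : ℤ) ^ ((j : ℕ) + 1) := by
    induction ((j : ℕ) + 1) with
    | zero => rfl
    | succ k ih => rw [pow_succ, pow_succ, ← ih]; rfl
  rw [hc, hp]

/-- The differential on inhomogeneous cochains squares to zero. -/
lemma cochainD_cochainD (r : ℕ) (f : (Fin r → Γ) → M) :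
    cochainD Γ M (r + 1) (cochainD Γ M r f) = 0 := by
  set F : (Fin r → ULift.{w} Γ) → ULift.{v} M := fun t => ULift.up (f fun i => (t i).down)
  have h1 : (inhomogeneousCochains.d (uRep Γ M) r).hom F
      = fun g => ULift.up (cochainD Γ M r f (fun i => (g i).down)) :=
    funext fun g => uRep_d_apply Γ M r f g
  have h0 : (inhomogeneousCochains.d (uRep Γ M) (r + 1)).hom
      ((inhomogeneousCochains.d (uRep Γ M) r).hom F) = 0 := by
    have h := groupCohomology.inhomogeneousCochains.d_comp_d r (uRep Γ M)
    exact LinearMap.congr_fun (congrArg ModuleCat.Hom.hom h) F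
  rw [h1] at h0
  funext g
  have hg := congrFun h0 (fun i => ULift.up (g i))
  rw [uRep_d_apply Γ M (r + 1) (cochainD Γ M r f) (fun i => ULift.up (g i))] at hg
  exact congrArg ULift.down hg
end DSq

section TorsionCompat

variable (A : Type*) [AddCommGroup A] (n : ℕ)
variable (G : Type*) [Group G] [DistribMulAction G A]

@[simp] lemma torsion_coe_smul (g : G) (a : ↥(torsion A n)) :
    ((g • a : ↥(torsion A n)) : A) = g • (a : A) := rfl

/-- The inclusion `A[n] ↪ A` commutes with the differential. -/
lemma coe_cochainD (m : ℕ) (f : (Fin m → G) → ↥(torsion A n)) (g : Fin (m + 1) → G) :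
    ((cochainD G ↥(torsion A n) m f g : ↥(torsion A n)) : A)
      = cochainD G A m (fun t => ((f t : A))) g := by
  show (((g 0 • f (fun i => g i.succ) +
      ∑ j : Fin (m + 1), (-1 : ℤ) ^ ((j : ℕ) + 1) • f (Fin.contractNth j (· * ·) g)) :
        ↥(torsion A n)) : A) = _
  rw [AddSubgroup.coe_add, AddSubgroup.val_finset_sum]
  simp only [AddSubgroup.coe_zsmul, torsion_coe_smul]
  rfl

/-- Any coboundary is `n` times a coboundary-with-zero-differential, given divisibility. -/
lemma exists_nsmul_coboundary (hdiv : ∀ k : ℕ, 0 < k → ∀ a : A, ∃ b : A, k • b = a)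
    (hn : 0 < n) (r : ℕ) (x : (Fin r → G) → A) (hx : x ∈ coboundaries G A r) :
    ∃ x' : (Fin r → G) → A, n • x' = x ∧ cochainD G A r x' = 0 := by
  cases r with
  | zero =>
    refine ⟨0, ?_, map_zero _⟩
    rw [AddSubgroup.mem_bot.mp hx, smul_zero]
  | succ r =>
    obtain ⟨u, hu⟩ := (AddMonoidHom.mem_range).mp hx
    choose u' hu' using fun t => hdiv n hn (u t)
    refine ⟨cochainD G A r u', ?_, cochainD_cochainD G A r u'⟩
    rw [← map_nsmul, show n • u' = u from funext fun t => hu' t, hu]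

end TorsionCompat

private lemma mk_nsmul {G : Type*} [AddGroup G] (N : AddSubgroup G) [N.Normal] (k : ℕ)
    (x : G) : (QuotientAddGroup.mk (k • x) : G ⧸ N) = k • QuotientAddGroup.mk x :=
  map_nsmul (QuotientAddGroup.mk' N) k x

private lemma resH_mk (Γ : Type*) [Group Γ] (M : Type*) [AddCommGroup M]
    [DistribMulAction Γ M] (Δ : Subgroup Γ) (r : ℕ) (z : ↥(cocycles Γ M r)) :
    resH Γ M Δ r (QuotientAddGroup.mk z) = QuotientAddGroup.mk (resZ Γ M Δ r z) :=
  rfl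

/-- If the "Tate–Shafarevich group" of `A[n]` in degree `r + 1` relative to the family of
subgroups `Γᵢ` vanishes, then the local-global principle for divisibility by `n` holds in
`H^r(Γ, A)` relative to this family. -/
theorem local_global_divisibility_of_sha_vanishes
    (Γ : Type*) [Group Γ] {I : Type*} (Γs : I → Subgroup Γ)
    (A : Type*) [AddCommGroup A] [DistribMulAction Γ A]
    (hdiv : ∀ k : ℕ, 0 < k → ∀ a : A, ∃ b : A, k • b = a)
    (n : ℕ) (hn : 0 < n) (r : ℕ)
    (hSha : ∀ ξ : Hr Γ ↥(torsion A n) (r + 1),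
      (∀ i : I, resH Γ ↥(torsion A n) (Γs i) (r + 1) ξ = 0) → ξ = 0) :
    ∀ ρ : Hr Γ A r,
      (∀ i : I, ∃ σ : Hr ↥(Γs i) A r, resH Γ A (Γs i) r ρ = n • σ) →
      ∃ σ : Hr Γ A r, ρ = n • σ := by
  intro ρ hloc
  obtain ⟨f, rfl⟩ := QuotientAddGroup.mk_surjective ρ
  -- divide the representing cocycle by `n` at the cochain level
  choose g hg using fun t => hdiv n hn (f.1 t)
  have hng : n • g = f.1 := funext fun t => hg t
  have hfz : cochainD Γ A r f.1 = 0 := f.2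
  set h : (Fin (r + 1) → Γ) → A := cochainD Γ A r g with hh
  have hnh : n • h = 0 := by rw [hh, ← map_nsmul, hng, hfz]
  -- the connecting cocycle with values in `A[n]`
  set h' : (Fin (r + 1) → Γ) → ↥(torsion A n) :=
    fun t => ⟨h t, congrFun hnh t⟩ with hh'
  have hcoe : (fun t => ((h' t : A))) = h := rfl
  have h'cocycle : h' ∈ cocycles Γ ↥(torsion A n) (r + 1) := by
    rw [cocycles, AddMonoidHom.mem_ker]
    funext t
    refine Subtype.ext ?_
    rw [coe_cochainD, hcoe, hh, cochainD_cochainD]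
    rfl
  set ξ : Hr Γ ↥(torsion A n) (r + 1) := QuotientAddGroup.mk ⟨h', h'cocycle⟩ with hξ
  -- the connecting class restricts to zero everywhere
  have hres : ∀ i : I, resH Γ ↥(torsion A n) (Γs i) (r + 1) ξ = 0 := by
    intro i
    obtain ⟨σ, hσ⟩ := hloc i
    obtain ⟨s, rfl⟩ := QuotientAddGroup.mk_surjective σ
    have hσ' : (QuotientAddGroup.mk (resZ Γ A (Γs i) r f) :
        Hr ↥(Γs i) A r) = QuotientAddGroup.mk (n • s) := by
      rw [resH_mk] at hσ
      exact hσ.trans (mk_nsmul _ n s).symm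
    have hmem := (QuotientAddGroup.eq).mp hσ'
    rw [AddSubgroup.mem_addSubgroupOf] at hmem
    have hx : resC Γ A (Γs i) r f.1 - n • s.1 ∈ coboundaries ↥(Γs i) A r := by
      have h2 := (coboundaries ↥(Γs i) A r).neg_mem hmem
      have e : -(((-(resZ Γ A (Γs i) r f) + n • s : ↥(cocycles ↥(Γs i) A r))) :
          (Fin r → ↥(Γs i)) → A) = resC Γ A (Γs i) r f.1 - n • s.1 := by
        show -(-(resC Γ A (Γs i) r f.1) + n • s.1) = _
        abel
      rwa [e] at h2
    obtain ⟨x', hnx', hdx'⟩ := exists_nsmul_coboundary A n ↥(Γs i) hdiv hn r _ hx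
    set w : (Fin r → ↥(Γs i)) → A := resC Γ A (Γs i) r g - s.1 - x' with hw
    have hnw : n • w = 0 := by
      rw [hw]
      rw [smul_sub, smul_sub, ← map_nsmul (resC Γ A (Γs i) r) n g, hng, hnx']
      abel
    set w' : (Fin r → ↥(Γs i)) → ↥(torsion A n) :=
      fun t => ⟨w t, congrFun hnw t⟩ with hw'
    have hwcoe : (fun t => ((w' t : A))) = w := rfl
    have hdw : cochainD ↥(Γs i) ↥(torsion A n) r w'
        = resC Γ ↥(torsion A n) (Γs i) (r + 1) h' := by
      funext t
      refine Subtype.ext ?_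
      rw [coe_cochainD, hwcoe]
      show cochainD ↥(Γs i) A r w t = h (fun k => ((t k : Γ)))
      have : cochainD ↥(Γs i) A r w
          = cochainD ↥(Γs i) A r (resC Γ A (Γs i) r g) - cochainD ↥(Γs i) A r s.1
            - cochainD ↥(Γs i) A r x' := by
        rw [hw]
        have e1 : resC Γ A (Γs i) r g - s.1 - x'
            = resC Γ A (Γs i) r g + (-(s.1) + -(x')) := by abel
        rw [e1, map_add, map_add, map_neg, map_neg]
        abel
      rw [this, s.2, hdx', resC_comm_d, hh]
      simp [resC]
    rw [hξ, resH_mk]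
    refine (QuotientAddGroup.eq_zero_iff _).mpr ?_
    rw [AddSubgroup.mem_addSubgroupOf]
    exact AddMonoidHom.mem_range.mpr ⟨w', hdw⟩
  -- conclude from the vanishing of Sha
  have hξ0 : ξ = 0 := hSha ξ hres
  rw [hξ] at hξ0
  replace hξ0 := (QuotientAddGroup.eq_zero_iff _).mp hξ0
  rw [AddSubgroup.mem_addSubgroupOf] at hξ0
  obtain ⟨p, hp⟩ := AddMonoidHom.mem_range.mp hξ0
  set q : (Fin r → Γ) → A := g - (fun t => ((p t : A))) with hq
  have hdq : q ∈ cocycles Γ A r := by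
    rw [cocycles, AddMonoidHom.mem_ker, hq, map_sub]
    have hcp : cochainD Γ A r (fun t => ((p t : A))) = h := by
      funext t
      rw [← coe_cochainD, hp]
    rw [hcp, hh]
    abel
  have hnq : n • q = f.1 := by
    rw [hq, smul_sub, hng]
    have : n • (fun t => ((p t : A))) = 0 := funext fun t => (p t).2
    rw [this]
    abel
  refine ⟨QuotientAddGroup.mk ⟨q, hdq⟩, ?_⟩
  refine Eq.trans ?_ (mk_nsmul ((coboundaries Γ A r).addSubgroupOf (cocycles Γ A r)) n ⟨q, hdq⟩)
  congr 1
  exact Subtype.ext hnq.symm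
end
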